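/- arXiv:1812.03349 — 11 statements merged into one kernel-verified Lean document; each statement's English description precedes it below -/
import Mathlib

section
/- Let ξ be a sequence in H such that dom(ξ) is dense, and let T_ξ = C_ξ* C_ξ be the self-adjoint operator associated to the closed nonnegative form Ω_ξ. Then ξ is a frame if and only if dom(T_ξ) = H and T_ξ is surjective. -/
local notation "⟪" x ", " y "⟫" => @inner ℂ _ _ x y

/-!
Once every `f` has square-summable coefficients, the analysis map `C f = (⟪ξ n, f⟫)ₙ` into `ℓ²`
is bounded by the closed graph theorem, and the characterisation of `T` forces `dom T = H` and
`T = C† C`. The frame inequalities say exactly that `C` is bounded below. For a bounded `C`,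
`C† C` is surjective iff `C` is bounded below: if `‖f‖ ≤ K ‖C f‖` then `C† C` is bounded below
too (`‖C f‖² = ⟪f, C† C f⟫`) and its range is closed with orthogonal complement `ker C = 0`;
conversely, writing `f = C† C x` gives `‖f‖² = ⟪C f, C x⟫ ≤ ‖C f‖ ‖C‖ ‖x‖`, and `x` is controlled
by `f` since the bijective `C† C` has a bounded inverse.
-/

open scoped lp InnerProduct

namespace ContinuousLinearMap

variable {𝕜 E F : Type*} [RCLike 𝕜] [NormedAddCommGroup E] [InnerProductSpace 𝕜 E]
  [CompleteSpace E] [NormedAddCommGroup F] [InnerProductSpace 𝕜 F] [CompleteSpace F]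

theorem orthogonal_range_adjoint_comp_self (C : E →L[𝕜] F) : (C† ∘L C).rangeᗮ = C.ker := by
  rw [orthogonal_range, (isPositive_adjoint_comp_self C).isSelfAdjoint.adjoint_eq,
    ker_adjoint_comp_self]

theorem norm_apply_sq_le_norm_mul_norm_adjoint_comp_self (C : E →L[𝕜] F) (x : E) :
    ‖C x‖ ^ 2 ≤ ‖x‖ * ‖(C† ∘L C) x‖ :=
  calc ‖C x‖ ^ 2 = RCLike.re (inner 𝕜 x ((C† ∘L C) x)) := by
        rw [comp_apply, adjoint_inner_right, inner_self_eq_norm_mul_norm, sq]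
    _ ≤ ‖x‖ * ‖(C† ∘L C) x‖ := (RCLike.re_le_norm _).trans (norm_inner_le_norm _ _)

theorem antilipschitz_adjoint_comp_self {C : E →L[𝕜] F} {K : NNReal}
    (hC : AntilipschitzWith K C) : AntilipschitzWith (K ^ 2) (C† ∘L C) := by
  refine (C† ∘L C).antilipschitz_of_bound fun x => ?_
  rcases (norm_nonneg x).eq_or_lt with hx | hx
  · rw [← hx]; positivity
  refine le_of_mul_le_mul_left ?_ hx
  calc ‖x‖ * ‖x‖ ≤ (K * ‖C x‖) ^ 2 := by
        rw [← sq]; exact pow_le_pow_left₀ (norm_nonneg x) (C.bound_of_antilipschitz hC x) 2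
    _ = K ^ 2 * ‖C x‖ ^ 2 := mul_pow _ _ _
    _ ≤ K ^ 2 * (‖x‖ * ‖(C† ∘L C) x‖) := by
        gcongr; exact C.norm_apply_sq_le_norm_mul_norm_adjoint_comp_self x
    _ = ‖x‖ * (↑(K ^ 2) * ‖(C† ∘L C) x‖) := by push_cast; ring

theorem exists_antilipschitzWith_of_surjective_adjoint_comp_self {C : E →L[𝕜] F}
    (hsurj : Function.Surjective (C† ∘L C)) : ∃ K, AntilipschitzWith K C := by
  have hinj : Function.Injective (C† ∘L C) := by
    rw [← coe_coe, ← LinearMap.ker_eq_bot,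
      ← (isPositive_adjoint_comp_self C).isSelfAdjoint.adjoint_eq, ← orthogonal_range,
      LinearMap.range_eq_top.2 hsurj, Submodule.top_orthogonal_eq_bot]
  obtain ⟨-, c, hc⟩ := ((C† ∘L C).bijective_iff_dense_range_and_antilipschitz).1 ⟨hinj, hsurj⟩
  refine ⟨c * ‖C‖₊, C.antilipschitz_of_bound fun f => ?_⟩
  obtain ⟨x, rfl⟩ := hsurj f
  set y := (C† ∘L C) x
  rcases (norm_nonneg y).eq_or_lt with hy | hy
  · rw [← hy]; positivity
  refine le_of_mul_le_mul_left ?_ hy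
  calc ‖y‖ * ‖y‖ = RCLike.re (inner 𝕜 (C y) (C x)) := by
        rw [← adjoint_inner_right, ← comp_apply, inner_self_eq_norm_mul_norm]
    _ ≤ ‖C y‖ * (‖C‖ * ‖x‖) := (RCLike.re_le_norm _).trans <| (norm_inner_le_norm _ _).trans <|
        mul_le_mul_of_nonneg_left (C.le_opNorm x) (norm_nonneg _)
    _ ≤ ‖C y‖ * (‖C‖ * (c * ‖y‖)) := by
        gcongr; exact (C† ∘L C).bound_of_antilipschitz hc x
    _ = ‖y‖ * (↑(c * ‖C‖₊) * ‖C y‖) := by push_cast; ring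

theorem surjective_adjoint_comp_self_of_antilipschitzWith {C : E →L[𝕜] F} {K : NNReal}
    (hC : AntilipschitzWith K C) : Function.Surjective (C† ∘L C) := by
  have hdense : (C† ∘L C).range.topologicalClosure = ⊤ := by
    rw [Submodule.topologicalClosure_eq_top_iff, orthogonal_range_adjoint_comp_self,
      LinearMap.ker_eq_bot]
    exact hC.injective
  exact ((C† ∘L C).bijective_iff_dense_range_and_antilipschitz.2
    ⟨hdense, _, antilipschitz_adjoint_comp_self hC⟩).2

theorem surjective_adjoint_comp_self_iff (C : E →L[𝕜] F) :
    Function.Surjective (C† ∘L C) ↔ ∃ K, AntilipschitzWith K C :=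
  ⟨exists_antilipschitzWith_of_surjective_adjoint_comp_self,
    fun ⟨_, hC⟩ => surjective_adjoint_comp_self_of_antilipschitzWith hC⟩

end ContinuousLinearMap

section AnalysisOperator

variable {𝕜 ι H : Type*} [RCLike 𝕜] [NormedAddCommGroup H] [InnerProductSpace 𝕜 H]

theorem memℓp_two_of_summable_sq {f : ι → 𝕜} (hf : Summable fun i => ‖f i‖ ^ 2) :
    Memℓp f 2 :=
  memℓp_gen (by simpa using hf)

theorem norm_sq_eq_tsum_lp_two (f : ℓ²(ι, 𝕜)) : ‖f‖ ^ 2 = ∑' i, ‖f i‖ ^ 2 := by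
  simpa using lp.norm_rpow_eq_tsum (p := 2) (by simp) f

variable (𝕜) in
def analysisMap (ξ : ι → H) (hξ : ∀ f, Summable fun i => ‖inner 𝕜 (ξ i) f‖ ^ 2) :
    H →ₗ[𝕜] ℓ²(ι, 𝕜) where
  toFun f := ⟨fun i => inner 𝕜 (ξ i) f, memℓp_two_of_summable_sq (hξ f)⟩
  map_add' _ _ := lp.ext <| funext fun _ => inner_add_right _ _ _
  map_smul' _ _ := lp.ext <| funext fun _ => inner_smul_right _ _ _

variable [CompleteSpace H]

variable (𝕜) in
def analysisOp (ξ : ι → H) (hξ : ∀ f, Summable fun i => ‖inner 𝕜 (ξ i) f‖ ^ 2) :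
    H →L[𝕜] ℓ²(ι, 𝕜) where
  toLinearMap := analysisMap 𝕜 ξ hξ
  cont := (analysisMap 𝕜 ξ hξ).continuous_of_seq_closed_graph fun _ f y hu hy => lp.ext <|
    funext fun i => tendsto_nhds_unique
      ((lp.evalCLM 𝕜 (fun _ : ι => 𝕜) 2 i).continuous.tendsto y |>.comp hy)
      ((continuous_const.inner continuous_id).tendsto f |>.comp hu)

variable {ξ : ι → H} {hξ : ∀ f, Summable fun i => ‖inner 𝕜 (ξ i) f‖ ^ 2}

@[simp]
theorem analysisOp_apply (f : H) (i : ι) : analysisOp 𝕜 ξ hξ f i = inner 𝕜 (ξ i) f := rfl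

theorem norm_analysisOp_sq (f : H) : ‖analysisOp 𝕜 ξ hξ f‖ ^ 2 = ∑' i, ‖inner 𝕜 (ξ i) f‖ ^ 2 :=
  norm_sq_eq_tsum_lp_two _

theorem hasSum_inner_mul_inner_analysisOp (f g : H) :
    HasSum (fun i => inner 𝕜 (ξ i) f * inner 𝕜 g (ξ i))
      (inner 𝕜 (analysisOp 𝕜 ξ hξ g) (analysisOp 𝕜 ξ hξ f)) :=
  (lp.hasSum_inner _ _).congr_fun fun i => by
    rw [analysisOp_apply, analysisOp_apply, RCLike.inner_apply, inner_conj_symm, mul_comm]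

theorem eq_univ_and_eq_adjoint_comp_analysisOp {domT : Set H} {T : H → H}
    (hT : ∀ f : H, (Summable fun i => ‖inner 𝕜 (ξ i) f‖ ^ 2) → ∀ h : H,
      (∀ g : H, (Summable fun i => ‖inner 𝕜 (ξ i) g‖ ^ 2) →
        HasSum (fun i => inner 𝕜 (ξ i) f * inner 𝕜 g (ξ i)) (inner 𝕜 g h)) →
      f ∈ domT ∧ T f = h) :
    domT = Set.univ ∧ T = ⇑((analysisOp 𝕜 ξ hξ)† ∘L analysisOp 𝕜 ξ hξ) := by
  have hT' (f : H) : f ∈ domT ∧ T f = ((analysisOp 𝕜 ξ hξ)† ∘L analysisOp 𝕜 ξ hξ) f :=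
    hT f (hξ f) _ fun g _ => by
      rw [ContinuousLinearMap.comp_apply, ContinuousLinearMap.adjoint_inner_right]
      exact hasSum_inner_mul_inner_analysisOp f g
  exact ⟨Set.eq_univ_of_forall fun f => (hT' f).1, funext fun f => (hT' f).2⟩

theorem frame_bounds_iff_antilipschitzWith_analysisOp :
    (∃ A > (0 : ℝ), ∃ B > (0 : ℝ), ∀ f : H, (Summable fun i => ‖inner 𝕜 (ξ i) f‖ ^ 2) ∧
        A * ‖f‖ ^ 2 ≤ ∑' i, ‖inner 𝕜 (ξ i) f‖ ^ 2 ∧ ∑' i, ‖inner 𝕜 (ξ i) f‖ ^ 2 ≤ B * ‖f‖ ^ 2) ↔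
      ∃ K, AntilipschitzWith K (analysisOp 𝕜 ξ hξ) := by
  simp only [← norm_analysisOp_sq (hξ := hξ), hξ, true_and,
    antilipschitzWith_iff_exists_mul_le_norm]
  set C := analysisOp 𝕜 ξ hξ
  constructor
  · rintro ⟨A, hA, _, -, hbounds⟩
    refine ⟨√A, by positivity, fun f => le_of_pow_le_pow_left₀ two_ne_zero (norm_nonneg _) ?_⟩
    rw [mul_pow, Real.sq_sqrt hA.le]
    exact (hbounds f).1
  · rintro ⟨c, hc, hlower⟩
    refine ⟨c ^ 2, by positivity, ‖C‖ ^ 2 + 1, by positivity, fun f => ⟨?_, ?_⟩⟩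
    · rw [← mul_pow]
      exact pow_le_pow_left₀ (by positivity) (hlower f) 2
    · calc ‖C f‖ ^ 2 ≤ ‖C‖ ^ 2 * ‖f‖ ^ 2 := by
            rw [← mul_pow]; exact pow_le_pow_left₀ (norm_nonneg _) (C.le_opNorm f) 2
        _ ≤ (‖C‖ ^ 2 + 1) * ‖f‖ ^ 2 := by nlinarith [sq_nonneg ‖f‖]

end AnalysisOperator

theorem stmt4_general {H : Type*} [NormedAddCommGroup H] [InnerProductSpace ℂ H] [CompleteSpace H]
    (ξ : ℕ → H)
    (domT : Set H) (T : H → H)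
    (hT1 : ∀ f ∈ domT, (Summable fun n => ‖⟪ξ n, f⟫‖ ^ 2) ∧
      ∀ g : H, (Summable fun n => ‖⟪ξ n, g⟫‖ ^ 2) →
        HasSum (fun n => ⟪ξ n, f⟫ * ⟪g, ξ n⟫) ⟪g, T f⟫)
    (hT2 : ∀ f : H, (Summable fun n => ‖⟪ξ n, f⟫‖ ^ 2) → ∀ h : H,
      (∀ g : H, (Summable fun n => ‖⟪ξ n, g⟫‖ ^ 2) →
        HasSum (fun n => ⟪ξ n, f⟫ * ⟪g, ξ n⟫) ⟪g, h⟫) → f ∈ domT ∧ T f = h) :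
    (∃ A > (0 : ℝ), ∃ B > (0 : ℝ), ∀ f : H, (Summable fun n => ‖⟪ξ n, f⟫‖ ^ 2) ∧
        A * ‖f‖ ^ 2 ≤ ∑' n, ‖⟪ξ n, f⟫‖ ^ 2 ∧ ∑' n, ‖⟪ξ n, f⟫‖ ^ 2 ≤ B * ‖f‖ ^ 2)
    ↔ (domT = Set.univ ∧ Function.Surjective T) := by
  constructor
  · intro hframe
    have hξ (f : H) : Summable fun n => ‖⟪ξ n, f⟫‖ ^ 2 := by
      obtain ⟨_, -, _, -, hbounds⟩ := hframe
      exact (hbounds f).1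
    obtain ⟨hdom, rfl⟩ := eq_univ_and_eq_adjoint_comp_analysisOp (hξ := hξ) hT2
    exact ⟨hdom, (ContinuousLinearMap.surjective_adjoint_comp_self_iff _).2
      (frame_bounds_iff_antilipschitzWith_analysisOp.1 hframe)⟩
  · rintro ⟨hdom, hsurj⟩
    have hξ (f : H) : Summable fun n => ‖⟪ξ n, f⟫‖ ^ 2 := (hT1 f (hdom ▸ Set.mem_univ f)).1
    obtain ⟨-, rfl⟩ := eq_univ_and_eq_adjoint_comp_analysisOp (hξ := hξ) hT2
    exact frame_bounds_iff_antilipschitzWith_analysisOp.2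
      ((ContinuousLinearMap.surjective_adjoint_comp_self_iff _).1 hsurj)

/-- Let `ξ` have dense domain `dom(ξ)` and let `T_ξ = C_ξ*C_ξ` be the operator associated to
the closed nonnegative form `Ω_ξ` (characterized by: `f ∈ dom(T_ξ)` with `T_ξ f = h` iff
`f ∈ dom(ξ)` and `Ω_ξ(f,g) = ⟨h,g⟩` for all `g ∈ dom(ξ)`). Then `ξ` is a frame if and only
if `dom(T_ξ) = H` and `T_ξ` is surjective. -/
theorem stmt4 {H : Type*} [NormedAddCommGroup H] [InnerProductSpace ℂ H] [CompleteSpace H]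
    (ξ : ℕ → H)
    (hdense : Dense {f : H | Summable fun n => ‖⟪ξ n, f⟫‖ ^ 2})
    (domT : Set H) (T : H → H)
    (hT1 : ∀ f ∈ domT, (Summable fun n => ‖⟪ξ n, f⟫‖ ^ 2) ∧
      ∀ g : H, (Summable fun n => ‖⟪ξ n, g⟫‖ ^ 2) →
        HasSum (fun n => ⟪ξ n, f⟫ * ⟪g, ξ n⟫) ⟪g, T f⟫)
    (hT2 : ∀ f : H, (Summable fun n => ‖⟪ξ n, f⟫‖ ^ 2) → ∀ h : H,
      (∀ g : H, (Summable fun n => ‖⟪ξ n, g⟫‖ ^ 2) →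
        HasSum (fun n => ⟪ξ n, f⟫ * ⟪g, ξ n⟫) ⟪g, h⟫) → f ∈ domT ∧ T f = h) :
    (∃ A > (0 : ℝ), ∃ B > (0 : ℝ), ∀ f : H, (Summable fun n => ‖⟪ξ n, f⟫‖ ^ 2) ∧
        A * ‖f‖ ^ 2 ≤ ∑' n, ‖⟪ξ n, f⟫‖ ^ 2 ∧ ∑' n, ‖⟪ξ n, f⟫‖ ^ 2 ≤ B * ‖f‖ ^ 2)
    ↔ (domT = Set.univ ∧ Function.Surjective T) :=
  stmt4_general ξ domT T hT1 hT2
end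

section
/- Let ξ be a sequence with dom(ξ) dense in H. Then ξ is a Bessel sequence if and only if the operator T_ξ = C_ξ*C_ξ is everywhere defined (dom(T_ξ) = H), and in that case T_ξ is bounded. -/
local notation "⟪" x ", " y "⟫" => @inner ℂ _ _ x y

/-!
If `ξ` is Bessel, its analysis operator `C : H → ℓ²` is bounded, and `C† C` satisfies the
identities characterising `T`, so `T` is defined everywhere. Conversely, if `T` is defined
everywhere, then `⟪T f, g⟫ = ⟪f, T g⟫` for all `f, g`, so by Hellinger–Toeplitz `T` is bounded,
and `∑ |⟪ξ n, f⟫|² = ⟪f, T f⟫ ≤ ‖T‖ ‖f‖²`.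
-/

open scoped InnerProductSpace

theorem memℓp_two_iff_summable_norm_sq {ι : Type*} {F : ι → Type*}
    [∀ i, NormedAddCommGroup (F i)] {c : ∀ i, F i} :
    Memℓp c 2 ↔ Summable fun i => ‖c i‖ ^ 2 := by
  rw [memℓp_gen_iff (by norm_num)]
  norm_num

theorem lp.norm_sq_eq_tsum {ι : Type*} {F : ι → Type*}
    [∀ i, NormedAddCommGroup (F i)] (c : lp F 2) : ‖c‖ ^ 2 = ∑' i, ‖c i‖ ^ 2 := by
  simpa using lp.norm_rpow_eq_tsum (p := 2) (by norm_num) c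

section Bessel

variable {𝕜 : Type*} [RCLike 𝕜] {E : Type*} [NormedAddCommGroup E] [InnerProductSpace 𝕜 E]
  {ι : Type*}

variable (𝕜) in
def IsBesselSequence (ξ : ι → E) (B : ℝ) : Prop :=
  ∀ f, (Summable fun i => ‖⟪ξ i, f⟫_𝕜‖ ^ 2) ∧ ∑' i, ‖⟪ξ i, f⟫_𝕜‖ ^ 2 ≤ B * ‖f‖ ^ 2

namespace IsBesselSequence

variable {ξ : ι → E} {B : ℝ}

noncomputable def analysis (hξ : IsBesselSequence 𝕜 ξ B) : E →L[𝕜] lp (fun _ : ι => 𝕜) 2 :=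
  LinearMap.mkContinuous
    { toFun := fun f => ⟨fun i => ⟪ξ i, f⟫_𝕜, memℓp_two_iff_summable_norm_sq.2 (hξ f).1⟩
      map_add' := fun f g => by ext i; exact inner_add_right _ _ _
      map_smul' := fun c f => by ext i; exact inner_smul_right _ _ _ }
    (Real.sqrt B) fun f => by
      have hsq : ‖(⟨fun i => ⟪ξ i, f⟫_𝕜, memℓp_two_iff_summable_norm_sq.2 (hξ f).1⟩ :
          lp (fun _ : ι => 𝕜) 2)‖ ^ 2 ≤ B * ‖f‖ ^ 2 :=
        (lp.norm_sq_eq_tsum _).trans_le (hξ f).2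
      simpa [Real.sqrt_mul', Real.sqrt_sq] using Real.sqrt_le_sqrt hsq

@[simp]
theorem analysis_apply (hξ : IsBesselSequence 𝕜 ξ B) (f : E) (i : ι) :
    hξ.analysis f i = ⟪ξ i, f⟫_𝕜 :=
  rfl

/-- The operator `T_ξ = C_ξ* C_ξ`. -/
noncomputable def frameOperator [CompleteSpace E] (hξ : IsBesselSequence 𝕜 ξ B) : E →L[𝕜] E :=
  ContinuousLinearMap.adjoint hξ.analysis ∘L hξ.analysis

theorem hasSum_inner_frameOperator [CompleteSpace E] (hξ : IsBesselSequence 𝕜 ξ B) (f g : E) :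
    HasSum (fun i => ⟪ξ i, f⟫_𝕜 * ⟪g, ξ i⟫_𝕜) ⟪g, hξ.frameOperator f⟫_𝕜 := by
  rw [frameOperator, ContinuousLinearMap.comp_apply, ContinuousLinearMap.adjoint_inner_right]
  convert lp.hasSum_inner (hξ.analysis g) (hξ.analysis f) using 2 with i
  simp only [analysis_apply, RCLike.inner_apply, inner_conj_symm]

end IsBesselSequence

end Bessel

section EverywhereDefined

variable {𝕜 : Type*} [RCLike 𝕜] {E : Type*} [NormedAddCommGroup E] [InnerProductSpace 𝕜 E]

/-- Hellinger–Toeplitz for an arbitrary map: linearity is itself forced by the symmetry. -/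
theorem exists_pos_bound_of_inner_map_comm [CompleteSpace E] {T : E → E}
    (hT : ∀ x y, ⟪T x, y⟫_𝕜 = ⟪x, T y⟫_𝕜) : ∃ C > 0, ∀ x, ‖T x‖ ≤ C * ‖x‖ := by
  let L : E →ₗ[𝕜] E :=
    { toFun := T
      map_add' := fun x y => ext_inner_right 𝕜 fun z => by
        rw [hT, inner_add_left, inner_add_left, hT, hT]
      map_smul' := fun c x => ext_inner_right 𝕜 fun z => by
        rw [hT, inner_smul_left, inner_smul_left, hT]
        rfl }
  have hL : L.IsSymmetric := hT
  exact SemilinearMapClass.bound_of_continuous L hL.continuous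

variable {ι : Type*} {ξ : ι → E} {T : E → E}

theorem inner_map_comm_of_hasSum
    (hT : ∀ f g, HasSum (fun i => ⟪ξ i, f⟫_𝕜 * ⟪g, ξ i⟫_𝕜) ⟪g, T f⟫_𝕜) (x y : E) :
    ⟪T x, y⟫_𝕜 = ⟪x, T y⟫_𝕜 := by
  have hconj := (RCLike.hasSum_conj' 𝕜).2 (hT x y)
  simp only [map_mul, inner_conj_symm] at hconj
  exact hconj.unique (by simpa only [mul_comm] using hT y x)

theorem hasSum_norm_inner_sq_of_hasSum
    (hT : ∀ f g, HasSum (fun i => ⟪ξ i, f⟫_𝕜 * ⟪g, ξ i⟫_𝕜) ⟪g, T f⟫_𝕜) (f : E) :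
    HasSum (fun i => ‖⟪ξ i, f⟫_𝕜‖ ^ 2) (RCLike.re ⟪f, T f⟫_𝕜) := by
  have hterm (i : ι) : ⟪ξ i, f⟫_𝕜 * ⟪f, ξ i⟫_𝕜 = (‖⟪ξ i, f⟫_𝕜‖ ^ 2 : ℝ) := by
    rw [← inner_conj_symm f, RCLike.mul_conj]
    norm_cast
  simpa only [hterm, RCLike.ofReal_re] using RCLike.hasSum_re 𝕜 (hT f f)

theorem isBesselSequence_of_hasSum
    (hT : ∀ f g, HasSum (fun i => ⟪ξ i, f⟫_𝕜 * ⟪g, ξ i⟫_𝕜) ⟪g, T f⟫_𝕜) {C : ℝ}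
    (hC : ∀ f, ‖T f‖ ≤ C * ‖f‖) :
    IsBesselSequence 𝕜 ξ C := fun f =>
  have hsum := hasSum_norm_inner_sq_of_hasSum hT f
  ⟨hsum.summable, hsum.tsum_eq ▸ calc
    RCLike.re ⟪f, T f⟫_𝕜 ≤ ‖f‖ * ‖T f‖ := (RCLike.re_le_norm _).trans (norm_inner_le_norm _ _)
    _ ≤ ‖f‖ * (C * ‖f‖) := by gcongr; exact hC f
    _ = C * ‖f‖ ^ 2 := by ring⟩

end EverywhereDefined

theorem stmt6_general {H : Type*} [NormedAddCommGroup H] [InnerProductSpace ℂ H] [CompleteSpace H]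
    (ξ : ℕ → H)
    (domT : Set H) (T : H → H)
    (hT1 : ∀ f ∈ domT, (Summable fun n => ‖⟪ξ n, f⟫‖ ^ 2) ∧
      ∀ g : H, (Summable fun n => ‖⟪ξ n, g⟫‖ ^ 2) →
        HasSum (fun n => ⟪ξ n, f⟫ * ⟪g, ξ n⟫) ⟪g, T f⟫)
    (hT2 : ∀ f : H, (Summable fun n => ‖⟪ξ n, f⟫‖ ^ 2) → ∀ h : H,
      (∀ g : H, (Summable fun n => ‖⟪ξ n, g⟫‖ ^ 2) →
        HasSum (fun n => ⟪ξ n, f⟫ * ⟪g, ξ n⟫) ⟪g, h⟫) → f ∈ domT ∧ T f = h) :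
    ((∃ B > (0 : ℝ), ∀ f : H, (Summable fun n => ‖⟪ξ n, f⟫‖ ^ 2) ∧
        ∑' n, ‖⟪ξ n, f⟫‖ ^ 2 ≤ B * ‖f‖ ^ 2) ↔ domT = Set.univ)
    ∧ (domT = Set.univ → ∃ C : ℝ, ∀ f : H, ‖T f‖ ≤ C * ‖f‖) := by
  have hasSum_of_univ (hdom : domT = Set.univ) (f g : H) :
      HasSum (fun n => ⟪ξ n, f⟫ * ⟪g, ξ n⟫) ⟪g, T f⟫ :=
    (hT1 f (hdom ▸ trivial)).2 g (hT1 g (hdom ▸ trivial)).1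
  have bounded_of_univ (hdom : domT = Set.univ) : ∃ C > 0, ∀ f, ‖T f‖ ≤ C * ‖f‖ :=
    exists_pos_bound_of_inner_map_comm (inner_map_comm_of_hasSum (hasSum_of_univ hdom))
  refine ⟨⟨fun ⟨B, _, hB⟩ => ?_, fun hdom => ?_⟩, fun hdom => ?_⟩
  · have hξ : IsBesselSequence ℂ ξ B := hB
    exact Set.eq_univ_of_forall fun f =>
      (hT2 f (hB f).1 _ fun g _ => hξ.hasSum_inner_frameOperator f g).1
  · obtain ⟨C, hC, hTC⟩ := bounded_of_univ hdom
    exact ⟨C, hC, isBesselSequence_of_hasSum (hasSum_of_univ hdom) hTC⟩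
  · obtain ⟨C, -, hTC⟩ := bounded_of_univ hdom
    exact ⟨C, hTC⟩

/-- Let `ξ` have dense domain and `T_ξ = C_ξ*C_ξ` be the associated operator. Then `ξ` is a
Bessel sequence if and only if `dom(T_ξ) = H`, and in that case `T_ξ` is bounded. -/
theorem stmt6 {H : Type*} [NormedAddCommGroup H] [InnerProductSpace ℂ H] [CompleteSpace H]
    (ξ : ℕ → H)
    (hdense : Dense {f : H | Summable fun n => ‖⟪ξ n, f⟫‖ ^ 2})
    (domT : Set H) (T : H → H)
    (hT1 : ∀ f ∈ domT, (Summable fun n => ‖⟪ξ n, f⟫‖ ^ 2) ∧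
      ∀ g : H, (Summable fun n => ‖⟪ξ n, g⟫‖ ^ 2) →
        HasSum (fun n => ⟪ξ n, f⟫ * ⟪g, ξ n⟫) ⟪g, T f⟫)
    (hT2 : ∀ f : H, (Summable fun n => ‖⟪ξ n, f⟫‖ ^ 2) → ∀ h : H,
      (∀ g : H, (Summable fun n => ‖⟪ξ n, g⟫‖ ^ 2) →
        HasSum (fun n => ⟪ξ n, f⟫ * ⟪g, ξ n⟫) ⟪g, h⟫) → f ∈ domT ∧ T f = h) :
    ((∃ B > (0 : ℝ), ∀ f : H, (Summable fun n => ‖⟪ξ n, f⟫‖ ^ 2) ∧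
        ∑' n, ‖⟪ξ n, f⟫‖ ^ 2 ≤ B * ‖f‖ ^ 2) ↔ domT = Set.univ)
    ∧ (domT = Set.univ → ∃ C : ℝ, ∀ f : H, ‖T f‖ ≤ C * ‖f‖) :=
  stmt6_general ξ domT T hT1 hT2
end

section
/- Let ξ be a lower semi-frame with dom(ξ) dense and T_ξ = C_ξ*C_ξ, so that 0 ∈ ρ(T_ξ). Then the sequence {T_ξ⁻¹ ξₙ} is a Bessel sequence, with bound ‖ |C_ξ|⁻¹ ‖². -/
/-!
Because `T_ξ` is symmetric and `T_ξ⁻¹` is a right inverse of it, `T_ξ⁻¹` is a bounded symmetric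
operator, so `⟪T_ξ⁻¹ ξₙ, f⟫ = ⟪ξₙ, T_ξ⁻¹ f⟫`. Hence `∑ₙ |⟪T_ξ⁻¹ ξₙ, f⟫|²` is the diagonal value
`⟪T_ξ⁻¹ f, T_ξ T_ξ⁻¹ f⟫ = ⟪T_ξ⁻¹ f, f⟫` of the form defining `T_ξ`, which is at most `‖T_ξ⁻¹‖ ‖f‖²`.
-/

local notation "⟪" x ", " y "⟫" => @inner ℂ _ _ x y

open ComplexConjugate

section FrameForm

variable {H : Type*} [NormedAddCommGroup H] [InnerProductSpace ℂ H] {ξ : ℕ → H}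

theorem HasSum.inner_mul_inner_swap {a b : H} {x : ℂ}
    (h : HasSum (fun n => ⟪ξ n, a⟫ * ⟪b, ξ n⟫) x) :
    HasSum (fun n => ⟪ξ n, b⟫ * ⟪a, ξ n⟫) (conj x) := by
  convert (Complex.hasSum_conj'.mpr h) using 2 with n
  simp only [map_mul, inner_conj_symm, mul_comm]

theorem HasSum.norm_inner_sq_of_inner_mul_inner {g : H} {x : ℂ}
    (h : HasSum (fun n => ⟪ξ n, g⟫ * ⟪g, ξ n⟫) x) :
    HasSum (fun n => ‖⟪ξ n, g⟫‖ ^ 2) x.re := by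
  have hofReal : HasSum (fun n => ((‖⟪ξ n, g⟫‖ ^ 2 : ℝ) : ℂ)) x := by
    convert h using 2 with n
    rw [← inner_conj_symm g (ξ n), Complex.mul_conj', Complex.ofReal_pow]
  simpa only [Complex.reCLM_apply, Complex.ofReal_re] using hofReal.mapL Complex.reCLM

theorem LinearMap.isSymmetric_of_rightInverse {D : Set H} {T : H → H} (S : H →ₗ[ℂ] H)
    (hT : ∀ a ∈ D, ∀ b ∈ D, ⟪b, T a⟫ = ⟪T b, a⟫) (hS : ∀ h, S h ∈ D ∧ T (S h) = h) :
    S.IsSymmetric := by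
  intro x y
  simpa only [(hS x).2, (hS y).2] using hT (S y) (hS y).1 (S x) (hS x).1

theorem inner_apply_comm_of_hasSum {D : Set H} {T : H → H}
    (hT : ∀ f ∈ D, ∀ g ∈ D, HasSum (fun n => ⟪ξ n, f⟫ * ⟪g, ξ n⟫) ⟪g, T f⟫) :
    ∀ a ∈ D, ∀ b ∈ D, ⟪b, T a⟫ = ⟪T b, a⟫ := by
  intro a ha b hb
  rw [← inner_conj_symm (T b) a]
  exact (hT a ha b hb).unique (hT b hb a ha).inner_mul_inner_swap

end FrameForm

theorem stmt7_general {H : Type*} [NormedAddCommGroup H] [InnerProductSpace ℂ H]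
    (ξ : ℕ → H)
    (domT : Set H) (T : H → H)
    (hT1 : ∀ f ∈ domT, (Summable fun n => ‖⟪ξ n, f⟫‖ ^ 2) ∧
      ∀ g : H, (Summable fun n => ‖⟪ξ n, g⟫‖ ^ 2) →
        HasSum (fun n => ⟪ξ n, f⟫ * ⟪g, ξ n⟫) ⟪g, T f⟫)
    (Tinv : H →L[ℂ] H)
    (hTinv2 : ∀ h : H, Tinv h ∈ domT ∧ T (Tinv h) = h) :
    ∀ f : H, (Summable fun n => ‖⟪Tinv (ξ n), f⟫‖ ^ 2) ∧
      ∑' n, ‖⟪Tinv (ξ n), f⟫‖ ^ 2 ≤ ‖Tinv‖ * ‖f‖ ^ 2 := by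
  have hform : ∀ f ∈ domT, ∀ g ∈ domT, HasSum (fun n => ⟪ξ n, f⟫ * ⟪g, ξ n⟫) ⟪g, T f⟫ :=
    fun f hf g hg => (hT1 f hf).2 g (hT1 g hg).1
  have hsymm : (Tinv : H →ₗ[ℂ] H).IsSymmetric :=
    LinearMap.isSymmetric_of_rightInverse _ (inner_apply_comm_of_hasSum hform) hTinv2
  intro f
  obtain ⟨hg, hTg⟩ := hTinv2 f
  have hcoeff : ∀ n, ⟪Tinv (ξ n), f⟫ = ⟪ξ n, Tinv f⟫ := fun n => hsymm (ξ n) f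
  have hdiag : HasSum (fun n => ‖⟪Tinv (ξ n), f⟫‖ ^ 2) (⟪Tinv f, f⟫).re := by
    simpa only [hcoeff, hTg] using (hform _ hg _ hg).norm_inner_sq_of_inner_mul_inner
  refine ⟨hdiag.summable, hdiag.tsum_eq ▸ ?_⟩
  calc (⟪Tinv f, f⟫).re ≤ ‖Tinv f‖ * ‖f‖ := re_inner_le_norm (𝕜 := ℂ) _ _
    _ ≤ ‖Tinv‖ * ‖f‖ * ‖f‖ := by gcongr; exact Tinv.le_opNorm f
    _ = ‖Tinv‖ * ‖f‖ ^ 2 := by ring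

/-- Let `ξ` be a lower semi-frame with dense domain and `T_ξ = C_ξ*C_ξ = |C_ξ|²` its
associated operator, which is boundedly invertible with inverse `T_ξ⁻¹`. Then `{T_ξ⁻¹ξₙ}`
is a Bessel sequence with bound `‖|C_ξ|⁻¹‖² = ‖T_ξ⁻¹‖`. -/
theorem stmt7 {H : Type*} [NormedAddCommGroup H] [InnerProductSpace ℂ H] [CompleteSpace H]
    (ξ : ℕ → H)
    (hdense : Dense {f : H | Summable fun n => ‖⟪ξ n, f⟫‖ ^ 2})
    (hlow : ∃ A > (0 : ℝ), ∀ f : H, (Summable fun n => ‖⟪ξ n, f⟫‖ ^ 2) →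
      A * ‖f‖ ^ 2 ≤ ∑' n, ‖⟪ξ n, f⟫‖ ^ 2)
    (domT : Set H) (T : H → H)
    (hT1 : ∀ f ∈ domT, (Summable fun n => ‖⟪ξ n, f⟫‖ ^ 2) ∧
      ∀ g : H, (Summable fun n => ‖⟪ξ n, g⟫‖ ^ 2) →
        HasSum (fun n => ⟪ξ n, f⟫ * ⟪g, ξ n⟫) ⟪g, T f⟫)
    (hT2 : ∀ f : H, (Summable fun n => ‖⟪ξ n, f⟫‖ ^ 2) → ∀ h : H,
      (∀ g : H, (Summable fun n => ‖⟪ξ n, g⟫‖ ^ 2) →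
        HasSum (fun n => ⟪ξ n, f⟫ * ⟪g, ξ n⟫) ⟪g, h⟫) → f ∈ domT ∧ T f = h)
    (Tinv : H →L[ℂ] H) (hTinv1 : ∀ f ∈ domT, Tinv (T f) = f)
    (hTinv2 : ∀ h : H, Tinv h ∈ domT ∧ T (Tinv h) = h) :
    ∀ f : H, (Summable fun n => ‖⟪Tinv (ξ n), f⟫‖ ^ 2) ∧
      ∑' n, ‖⟪Tinv (ξ n), f⟫‖ ^ 2 ≤ ‖Tinv‖ * ‖f‖ ^ 2 :=
  stmt7_general ξ domT T hT1 Tinv hTinv2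
end

section
/- Let ξ be a lower semi-frame with dom(ξ) dense and T_ξ = C_ξ*C_ξ. Then for every g ∈ dom(ξ), the reconstruction formula g = Σₙ ⟨g, ξₙ⟩ T_ξ⁻¹ ξₙ holds with convergence in norm. -/
/-!
Write `S = T_ξ⁻¹`. Testing `T_ξ (S h) = h` against `g ∈ dom(ξ)` gives
`⟪g, h⟫ = ∑ₙ ⟪ξₙ, S h⟫ ⟪g, ξₙ⟫`. Hence `S` is symmetric and
`∑ₙ |⟪S ξₙ, v⟫|² = ⟪S v, v⟫ ≤ ‖S‖ ‖v‖²`, so `{S ξₙ}` is a Bessel sequence and the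
series converges for the ℓ² coefficients `⟪ξₙ, g⟫`. Its sum `s` satisfies
`⟪h, s⟫ = ∑ₙ ⟪ξₙ, g⟫ ⟪S h, ξₙ⟫ = ⟪h, g⟫` for every `h`, so `s = g`.
-/

local notation "⟪" x ", " y "⟫" => @inner ℂ _ _ x y

open scoped InnerProductSpace

section

variable {𝕜 H ι : Type*} [RCLike 𝕜] [NormedAddCommGroup H] [InnerProductSpace 𝕜 H]

theorem norm_sum_smul_le_of_bessel {η : ι → H} {B : ℝ}
    (hη : ∀ (v : H) (t : Finset ι), ∑ n ∈ t, ‖⟪η n, v⟫_𝕜‖ ^ 2 ≤ B * ‖v‖ ^ 2)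
    (c : ι → 𝕜) (t : Finset ι) :
    ‖∑ n ∈ t, c n • η n‖ ≤ √B * √(∑ n ∈ t, ‖c n‖ ^ 2) := by
  set v := ∑ n ∈ t, c n • η n
  have hv_sq : ‖v‖ * ‖v‖ ≤ √B * √(∑ n ∈ t, ‖c n‖ ^ 2) * ‖v‖ :=
    calc ‖v‖ * ‖v‖ = RCLike.re (∑ n ∈ t, c n * ⟪v, η n⟫_𝕜) := by
          rw [← sq, ← inner_self_eq_norm_sq (𝕜 := 𝕜)]
          simp only [v, inner_sum, inner_smul_right]
      _ ≤ ∑ n ∈ t, ‖c n‖ * ‖⟪η n, v⟫_𝕜‖ := by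
          refine (RCLike.re_le_norm _).trans ((norm_sum_le _ _).trans_eq ?_)
          simp only [norm_mul, norm_inner_symm]
      _ ≤ √(∑ n ∈ t, ‖c n‖ ^ 2) * √(∑ n ∈ t, ‖⟪η n, v⟫_𝕜‖ ^ 2) :=
          Real.sum_mul_le_sqrt_mul_sqrt _ _ _
      _ ≤ √(∑ n ∈ t, ‖c n‖ ^ 2) * √(B * ‖v‖ ^ 2) := by gcongr; exact hη v t
      _ = √B * √(∑ n ∈ t, ‖c n‖ ^ 2) * ‖v‖ := by
          rw [Real.sqrt_mul' _ (sq_nonneg _), Real.sqrt_sq (norm_nonneg _)]; ring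
  rcases (norm_nonneg v).eq_or_lt with hv | hv
  · rw [← hv]; positivity
  · exact le_of_mul_le_mul_right hv_sq hv

theorem summable_smul_of_bessel [CompleteSpace H] {η : ι → H} {B : ℝ}
    (hη : ∀ (v : H) (t : Finset ι), ∑ n ∈ t, ‖⟪η n, v⟫_𝕜‖ ^ 2 ≤ B * ‖v‖ ^ 2)
    {c : ι → 𝕜} (hc : Summable fun n => ‖c n‖ ^ 2) :
    Summable fun n => c n • η n := by
  rw [summable_iff_vanishing_norm]
  intro ε hε
  set K := √B + 1
  have hK : 0 < K := by positivity
  obtain ⟨s, hs⟩ := summable_iff_vanishing_norm.1 hc ((ε / K) ^ 2) (by positivity)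
  refine ⟨s, fun t ht => ?_⟩
  have htail : √(∑ n ∈ t, ‖c n‖ ^ 2) < ε / K := by
    rw [Real.sqrt_lt' (by positivity)]
    exact (le_abs_self _).trans_lt (hs t ht)
  calc ‖∑ n ∈ t, c n • η n‖ ≤ √B * √(∑ n ∈ t, ‖c n‖ ^ 2) :=
        norm_sum_smul_le_of_bessel hη c t
    _ ≤ K * √(∑ n ∈ t, ‖c n‖ ^ 2) := by gcongr; linarith
    _ < K * (ε / K) := by gcongr
    _ = ε := mul_div_cancel₀ _ hK.ne'

/-- `S` is a right inverse of the frame operator `T_ξ = C_ξ* C_ξ` of `ξ`, where `T_ξ f = h`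
is read weakly: `⟪g, h⟫ = ∑ₙ ⟪ξₙ, f⟫ ⟪g, ξₙ⟫` for every `g` in the domain of `C_ξ`. -/
structure IsFrameOperatorRightInverse (ξ : ι → H) (S : H →L[𝕜] H) : Prop where
  summable_norm_inner_sq (h : H) : Summable fun n => ‖⟪ξ n, S h⟫_𝕜‖ ^ 2
  hasSum_inner_mul_inner (h g : H) : (Summable fun n => ‖⟪ξ n, g⟫_𝕜‖ ^ 2) →
    HasSum (fun n => ⟪ξ n, S h⟫_𝕜 * ⟪g, ξ n⟫_𝕜) ⟪g, h⟫_𝕜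

namespace IsFrameOperatorRightInverse

variable {ξ : ι → H} {S : H →L[𝕜] H}

theorem hasSum_inner_map_mul_inner (hS : IsFrameOperatorRightInverse ξ S) (h : H) {g : H}
    (hg : Summable fun n => ‖⟪ξ n, g⟫_𝕜‖ ^ 2) :
    HasSum (fun n => ⟪S h, ξ n⟫_𝕜 * ⟪ξ n, g⟫_𝕜) ⟪h, g⟫_𝕜 := by
  simpa only [star_mul', RCLike.star_def, inner_conj_symm]
    using (hS.hasSum_inner_mul_inner h g hg).star

theorem isSymmetric (hS : IsFrameOperatorRightInverse ξ S) : (S : H →ₗ[𝕜] H).IsSymmetric :=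
  fun a b => (hS.hasSum_inner_mul_inner b (S a) (hS.summable_norm_inner_sq a)).unique <| by
    simpa only [mul_comm, ContinuousLinearMap.coe_coe]
      using hS.hasSum_inner_map_mul_inner a (hS.summable_norm_inner_sq b)

theorem sum_norm_inner_sq_le (hS : IsFrameOperatorRightInverse ξ S) (v : H) (t : Finset ι) :
    ∑ n ∈ t, ‖⟪S (ξ n), v⟫_𝕜‖ ^ 2 ≤ ‖S‖ * ‖v‖ ^ 2 := by
  have hsum : HasSum (fun n => ‖⟪ξ n, S v⟫_𝕜‖ ^ 2) (RCLike.re ⟪S v, v⟫_𝕜) := by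
    simpa only [← inner_conj_symm (S v), RCLike.mul_conj, ← RCLike.ofReal_pow, RCLike.ofReal_re]
      using RCLike.hasSum_re 𝕜 (hS.hasSum_inner_mul_inner v (S v) (hS.summable_norm_inner_sq v))
  calc ∑ n ∈ t, ‖⟪S (ξ n), v⟫_𝕜‖ ^ 2 = ∑ n ∈ t, ‖⟪ξ n, S v⟫_𝕜‖ ^ 2 := by
        simp only [← ContinuousLinearMap.coe_coe, hS.isSymmetric _ _]
    _ ≤ RCLike.re ⟪S v, v⟫_𝕜 :=
        hsum.tsum_eq ▸ hsum.summable.sum_le_tsum t fun n _ => by positivity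
    _ ≤ ‖S v‖ * ‖v‖ := (RCLike.re_le_norm _).trans (norm_inner_le_norm _ _)
    _ ≤ ‖S‖ * ‖v‖ ^ 2 := by rw [sq, ← mul_assoc]; gcongr; exact S.le_opNorm v

theorem hasSum_reconstruction [CompleteSpace H] (hS : IsFrameOperatorRightInverse ξ S) {g : H}
    (hg : Summable fun n => ‖⟪ξ n, g⟫_𝕜‖ ^ 2) :
    HasSum (fun n => ⟪ξ n, g⟫_𝕜 • S (ξ n)) g := by
  obtain ⟨s, hs⟩ := summable_smul_of_bessel hS.sum_norm_inner_sq_le hg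
  obtain rfl : s = g := ext_inner_left 𝕜 fun h => ((innerSL 𝕜 h).hasSum hs).unique <| by
    convert hS.hasSum_inner_map_mul_inner h hg using 2 with n
    rw [innerSL_apply_apply, inner_smul_right, ← ContinuousLinearMap.coe_coe S,
      ← hS.isSymmetric, mul_comm]
  exact hs

end IsFrameOperatorRightInverse

end

theorem stmt8_general {H : Type*} [NormedAddCommGroup H] [InnerProductSpace ℂ H] [CompleteSpace H]
    (ξ : ℕ → H)
    (domT : Set H) (T : H → H)
    (hT1 : ∀ f ∈ domT, (Summable fun n => ‖⟪ξ n, f⟫‖ ^ 2) ∧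
      ∀ g : H, (Summable fun n => ‖⟪ξ n, g⟫‖ ^ 2) →
        HasSum (fun n => ⟪ξ n, f⟫ * ⟪g, ξ n⟫) ⟪g, T f⟫)
    (Tinv : H →L[ℂ] H)
    (hTinv2 : ∀ h : H, Tinv h ∈ domT ∧ T (Tinv h) = h) :
    ∀ g : H, (Summable fun n => ‖⟪ξ n, g⟫‖ ^ 2) →
      HasSum (fun n => ⟪ξ n, g⟫ • Tinv (ξ n)) g := by
  have hTinv : IsFrameOperatorRightInverse ξ Tinv :=
    { summable_norm_inner_sq := fun h => (hT1 _ (hTinv2 h).1).1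
      hasSum_inner_mul_inner := fun h g hg => by
        simpa only [(hTinv2 h).2] using (hT1 _ (hTinv2 h).1).2 g hg }
  exact fun g hg => hTinv.hasSum_reconstruction hg

/-- Let `ξ` be a lower semi-frame with dense domain and `T_ξ = C_ξ*C_ξ` its associated
operator, boundedly invertible with inverse `T_ξ⁻¹`. Then for every `g ∈ dom(ξ)` the
reconstruction formula `g = Σₙ ⟨g,ξₙ⟩ T_ξ⁻¹ξₙ` holds with convergence in norm. -/
theorem stmt8 {H : Type*} [NormedAddCommGroup H] [InnerProductSpace ℂ H] [CompleteSpace H]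
    (ξ : ℕ → H)
    (hdense : Dense {f : H | Summable fun n => ‖⟪ξ n, f⟫‖ ^ 2})
    (hlow : ∃ A > (0 : ℝ), ∀ f : H, (Summable fun n => ‖⟪ξ n, f⟫‖ ^ 2) →
      A * ‖f‖ ^ 2 ≤ ∑' n, ‖⟪ξ n, f⟫‖ ^ 2)
    (domT : Set H) (T : H → H)
    (hT1 : ∀ f ∈ domT, (Summable fun n => ‖⟪ξ n, f⟫‖ ^ 2) ∧
      ∀ g : H, (Summable fun n => ‖⟪ξ n, g⟫‖ ^ 2) →
        HasSum (fun n => ⟪ξ n, f⟫ * ⟪g, ξ n⟫) ⟪g, T f⟫)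
    (hT2 : ∀ f : H, (Summable fun n => ‖⟪ξ n, f⟫‖ ^ 2) → ∀ h : H,
      (∀ g : H, (Summable fun n => ‖⟪ξ n, g⟫‖ ^ 2) →
        HasSum (fun n => ⟪ξ n, f⟫ * ⟪g, ξ n⟫) ⟪g, h⟫) → f ∈ domT ∧ T f = h)
    (Tinv : H →L[ℂ] H) (hTinv1 : ∀ f ∈ domT, Tinv (T f) = f)
    (hTinv2 : ∀ h : H, Tinv h ∈ domT ∧ T (Tinv h) = h) :
    ∀ g : H, (Summable fun n => ‖⟪ξ n, g⟫‖ ^ 2) →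
      HasSum (fun n => ⟪ξ n, g⟫ • Tinv (ξ n)) g :=
  stmt8_general ξ domT T hT1 Tinv hTinv2
end

section
/- A sequence ξ in H is a lower semi-frame if and only if there exists an inner product ⟨·,·⟩₊ on dom(ξ) making dom(ξ) a Hilbert space with α‖f‖ ≤ ‖f‖₊ for some α > 0, such that ξ is a frame for dom(ξ) with respect to ‖·‖₊, i.e. A‖f‖₊² ≤ Σₙ |⟨f,ξₙ⟩|² ≤ B‖f‖₊² for all f ∈ dom(ξ) and some A,B > 0. -/
open Filter

local notation "⟪" x ", " y "⟫" => @inner ℂ _ _ x y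

/-!
The forward direction takes `⟨f, g⟩₊ = Σₙ conj ⟨ξₙ, f⟩ ⟨ξₙ, g⟩`, for which the frame inequalities
hold with `A = B = 1` and the lower semi-frame bound gives `√A ‖f‖ ≤ ‖f‖₊`. Completeness: a
`‖·‖₊`-Cauchy sequence is Cauchy in `H` by the lower bound, so it has a limit `f` in `H`; since
`g ↦ Σₙ |⟨g, ξₙ⟩|²` is lower semicontinuous on `H` (a supremum of continuous partial sums), the
`‖·‖₊`-Cauchy estimates pass to the limit, which puts `f` in `dom(ξ)` and makes it the `‖·‖₊`-limit.
Conversely, `α‖f‖ ≤ ‖f‖₊` and the lower frame bound give a lower semi-frame bound `Aα²`.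
-/

namespace LowerSemiFrame

variable {𝕜 H : Type*} [RCLike 𝕜] [NormedAddCommGroup H] [InnerProductSpace 𝕜 H] (ξ : ℕ → H)

lemma sq_norm_add_le_two_mul (a b : 𝕜) : ‖a + b‖ ^ 2 ≤ 2 * ‖a‖ ^ 2 + 2 * ‖b‖ ^ 2 := by
  nlinarith [norm_add_le a b, norm_nonneg (a + b), sq_nonneg (‖a‖ - ‖b‖)]

lemma summable_conj_mul_of_summable_sq_norm {a b : ℕ → 𝕜} (ha : Summable fun n => ‖a n‖ ^ 2)
    (hb : Summable fun n => ‖b n‖ ^ 2) : Summable fun n => (starRingEnd 𝕜) (a n) * b n := by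
  refine Summable.of_norm_bounded ((ha.add hb).div_const 2) fun n => ?_
  rw [norm_mul, RCLike.norm_conj]
  linarith [two_mul_le_add_sq ‖a n‖ ‖b n‖]

variable (𝕜) in
/-- `dom(ξ)`, the domain of the analysis operator `f ↦ (⟨ξₙ, f⟩)ₙ`. -/
def analysisDomain : Submodule 𝕜 H where
  carrier := {f | Summable fun n => ‖inner 𝕜 (ξ n) f‖ ^ 2}
  zero_mem' := by simp
  add_mem' {f g} hf hg := by
    refine Summable.of_nonneg_of_le (fun n => by positivity) (fun n => ?_)
      ((hf.mul_left 2).add (hg.mul_left 2))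
    rw [inner_add_right]
    exact sq_norm_add_le_two_mul _ _
  smul_mem' c f hf := by
    simpa only [Set.mem_ofPred_eq, inner_smul_right, norm_mul, mul_pow] using hf.mul_left (‖c‖ ^ 2)

variable (𝕜) in
noncomputable def frameInner (f g : H) : 𝕜 :=
  ∑' n, (starRingEnd 𝕜) (inner 𝕜 (ξ n) f) * inner 𝕜 (ξ n) g

lemma re_frameInner_self (f : H) :
    RCLike.re (frameInner 𝕜 ξ f f) = ∑' n, ‖inner 𝕜 (ξ n) f‖ ^ 2 := by
  simp only [frameInner, RCLike.conj_mul, ← RCLike.ofReal_pow, ← RCLike.ofReal_tsum,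
    RCLike.ofReal_re]

lemma conj_frameInner (f g : H) :
    (starRingEnd 𝕜) (frameInner 𝕜 ξ f g) = frameInner 𝕜 ξ g f := by
  simp only [frameInner, starRingEnd_apply, tsum_star, star_mul', star_star, mul_comm]

lemma frameInner_add_right {f g h : H} (hf : f ∈ analysisDomain 𝕜 ξ)
    (hg : g ∈ analysisDomain 𝕜 ξ) (hh : h ∈ analysisDomain 𝕜 ξ) :
    frameInner 𝕜 ξ f (g + h) = frameInner 𝕜 ξ f g + frameInner 𝕜 ξ f h := by
  simp only [frameInner, inner_add_right, mul_add]
  exact (summable_conj_mul_of_summable_sq_norm hf hg).tsum_add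
    (summable_conj_mul_of_summable_sq_norm hf hh)

lemma frameInner_smul_right (c : 𝕜) (f g : H) :
    frameInner 𝕜 ξ f (c • g) = c * frameInner 𝕜 ξ f g := by
  simp only [frameInner, inner_smul_right, mul_left_comm _ c, tsum_mul_left]

/-- Lower semicontinuity of `g ↦ Σₙ ‖⟨ξₙ, g⟩‖²`, in the form of a closed sublevel set. -/
lemma mem_analysisDomain_and_tsum_le_of_tendsto {ι : Type*} {l : Filter ι} [l.NeBot]
    {g : ι → H} {g₀ : H} {ε : ℝ} (hg : Tendsto g l (nhds g₀))
    (hle : ∀ᶠ k in l, g k ∈ analysisDomain 𝕜 ξ ∧ ∑' n, ‖inner 𝕜 (ξ n) (g k)‖ ^ 2 ≤ ε) :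
    g₀ ∈ analysisDomain 𝕜 ξ ∧ ∑' n, ‖inner 𝕜 (ξ n) g₀‖ ^ 2 ≤ ε := by
  have hpartial : ∀ m, ∑ i ∈ Finset.range m, ‖inner 𝕜 (ξ i) g₀‖ ^ 2 ≤ ε := by
    intro m
    have hlim : Tendsto (fun k => ∑ i ∈ Finset.range m, ‖inner 𝕜 (ξ i) (g k)‖ ^ 2) l
        (nhds (∑ i ∈ Finset.range m, ‖inner 𝕜 (ξ i) g₀‖ ^ 2)) :=
      tendsto_finsetSum _ fun i _ => (tendsto_const_nhds.inner hg).norm.pow 2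
    refine le_of_tendsto hlim (hle.mono fun k hk => ?_)
    exact (hk.1.sum_le_tsum _ fun i _ => by positivity).trans hk.2
  have hsum := summable_of_sum_range_le (fun n => by positivity) hpartial
  exact ⟨hsum, hsum.tsum_le_of_sum_range_le hpartial⟩

variable {ξ} {A : ℝ} (hA : 0 < A)
  (hlow : ∀ f ∈ analysisDomain 𝕜 ξ, A * ‖f‖ ^ 2 ≤ ∑' n, ‖inner 𝕜 (ξ n) f‖ ^ 2)
  {F : ℕ → H} (hF : ∀ k, F k ∈ analysisDomain 𝕜 ξ)
  (hcau : ∀ ε > 0, ∃ N, ∀ j ≥ N, ∀ k ≥ N, ∑' n, ‖inner 𝕜 (ξ n) (F j - F k)‖ ^ 2 < ε)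
include hA hlow hF hcau

lemma cauchySeq_of_tsum_sq_norm_sub_lt : CauchySeq F := by
  refine Metric.cauchySeq_iff.2 fun ε hε => ?_
  obtain ⟨N, hN⟩ := hcau (A * ε ^ 2) (by positivity)
  refine ⟨N, fun j hj k hk => ?_⟩
  have hA_sq : A * ‖F j - F k‖ ^ 2 < A * ε ^ 2 :=
    (hlow _ (sub_mem (hF j) (hF k))).trans_lt (hN j hj k hk)
  rw [dist_eq_norm]
  exact lt_of_pow_lt_pow_left₀ 2 hε.le (lt_of_mul_lt_mul_left hA_sq hA.le)

lemma exists_tendsto_tsum_sq_norm_sub [CompleteSpace H] :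
    ∃ f ∈ analysisDomain 𝕜 ξ,
      Tendsto (fun k => ∑' n, ‖inner 𝕜 (ξ n) (F k - f)‖ ^ 2) atTop (nhds 0) := by
  obtain ⟨f, hf⟩ := cauchySeq_tendsto_of_complete (cauchySeq_of_tsum_sq_norm_sub_lt hA hlow hF hcau)
  have hclose : ∀ ε > 0, ∀ᶠ j in atTop,
      F j - f ∈ analysisDomain 𝕜 ξ ∧ ∑' n, ‖inner 𝕜 (ξ n) (F j - f)‖ ^ 2 ≤ ε := by
    intro ε hε
    obtain ⟨N, hN⟩ := hcau ε hε
    filter_upwards [eventually_ge_atTop N] with j hj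
    refine mem_analysisDomain_and_tsum_le_of_tendsto ξ (tendsto_const_nhds.sub hf) ?_
    filter_upwards [eventually_ge_atTop N] with k hk
    exact ⟨sub_mem (hF j) (hF k), (hN j hj k hk).le⟩
  obtain ⟨j, hj, -⟩ := (hclose 1 one_pos).exists
  refine ⟨f, by simpa using sub_mem (hF j) hj, tendsto_order.2 ⟨fun a ha => ?_, fun a ha => ?_⟩⟩
  · exact Eventually.of_forall fun k => ha.trans_le (tsum_nonneg fun n => by positivity)
  · exact (hclose (a / 2) (half_pos ha)).mono fun k hk => hk.2.trans_lt (half_lt_self ha)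

end LowerSemiFrame

open LowerSemiFrame

/-- A sequence `ξ` is a lower semi-frame if and only if there is an inner product `⟨·,·⟩₊`
on `dom(ξ)` turning it into a Hilbert space with `α‖f‖ ≤ ‖f‖₊` for some `α > 0`, and such
that `ξ` is a frame for `(dom(ξ), ‖·‖₊)`:
`A‖f‖₊² ≤ Σₙ |⟨f,ξₙ⟩|² ≤ B‖f‖₊²` for all `f ∈ dom(ξ)`. -/
theorem stmt9 {H : Type*} [NormedAddCommGroup H] [InnerProductSpace ℂ H] [CompleteSpace H]
    (ξ : ℕ → H) :
    (∃ A > (0 : ℝ), ∀ f : H, (Summable fun n => ‖⟪ξ n, f⟫‖ ^ 2) →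
        A * ‖f‖ ^ 2 ≤ ∑' n, ‖⟪ξ n, f⟫‖ ^ 2)
    ↔
    ∃ (ip : H → H → ℂ) (α A B : ℝ), 0 < α ∧ 0 < A ∧ 0 < B ∧
      -- conjugate symmetry on dom(ξ)
      (∀ f g : H, (Summable fun n => ‖⟪ξ n, f⟫‖ ^ 2) → (Summable fun n => ‖⟪ξ n, g⟫‖ ^ 2) →
        ip g f = (starRingEnd ℂ) (ip f g)) ∧
      -- linearity in the second argument on dom(ξ)
      (∀ f g h : H, (Summable fun n => ‖⟪ξ n, f⟫‖ ^ 2) → (Summable fun n => ‖⟪ξ n, g⟫‖ ^ 2) →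
        (Summable fun n => ‖⟪ξ n, h⟫‖ ^ 2) → ip f (g + h) = ip f g + ip f h) ∧
      (∀ (c : ℂ) (f g : H), (Summable fun n => ‖⟪ξ n, f⟫‖ ^ 2) →
        (Summable fun n => ‖⟪ξ n, g⟫‖ ^ 2) → ip f (c • g) = c * ip f g) ∧
      -- positivity and comparison with the norm of H
      (∀ f : H, (Summable fun n => ‖⟪ξ n, f⟫‖ ^ 2) → 0 ≤ (ip f f).re) ∧
      (∀ f : H, (Summable fun n => ‖⟪ξ n, f⟫‖ ^ 2) → (α * ‖f‖) ^ 2 ≤ (ip f f).re) ∧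
      -- completeness of dom(ξ) for the norm ‖f‖₊ = √(ip f f).re
      (∀ F : ℕ → H, (∀ k, Summable fun n => ‖⟪ξ n, F k⟫‖ ^ 2) →
        (∀ ε > (0 : ℝ), ∃ N, ∀ j ≥ N, ∀ k ≥ N, (ip (F j - F k) (F j - F k)).re < ε) →
        ∃ f : H, (Summable fun n => ‖⟪ξ n, f⟫‖ ^ 2) ∧
          Tendsto (fun k => (ip (F k - f) (F k - f)).re) atTop (nhds 0)) ∧
      -- frame inequalities with respect to ‖·‖₊
      (∀ f : H, (Summable fun n => ‖⟪ξ n, f⟫‖ ^ 2) →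
        A * (ip f f).re ≤ ∑' n, ‖⟪ξ n, f⟫‖ ^ 2 ∧
        ∑' n, ‖⟪ξ n, f⟫‖ ^ 2 ≤ B * (ip f f).re) := by
  constructor
  · rintro ⟨A, hA, hlow⟩
    have hre (f : H) : (frameInner ℂ ξ f f).re = ∑' n, ‖⟪ξ n, f⟫‖ ^ 2 :=
      re_frameInner_self (𝕜 := ℂ) ξ f
    refine ⟨frameInner ℂ ξ, √A, 1, 1, Real.sqrt_pos.2 hA, one_pos, one_pos,
      fun f g _ _ => (conj_frameInner ξ f g).symm,
      fun f g h hf hg hh => frameInner_add_right ξ hf hg hh,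
      fun c f g _ _ => frameInner_smul_right ξ c f g,
      fun f _ => (hre f).symm ▸ tsum_nonneg fun n => by positivity,
      fun f hf => by rw [hre, mul_pow, Real.sq_sqrt hA.le]; exact hlow f hf,
      fun F hF hcau => ?_, fun f _ => by simp [hre]⟩
    simp only [hre] at hcau ⊢
    exact exists_tendsto_tsum_sq_norm_sub hA hlow hF hcau
  · rintro ⟨ip, α, A, B, hα, hA, -, -, -, -, -, hnorm, -, hframe⟩
    refine ⟨A * α ^ 2, by positivity, fun f hf => ?_⟩
    calc A * α ^ 2 * ‖f‖ ^ 2 = A * (α * ‖f‖) ^ 2 := by ring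
      _ ≤ A * (ip f f).re := by gcongr; exact hnorm f hf
      _ ≤ _ := (hframe f hf).1
end

section
/- Let W be a closed subspace of ℓ² with finite-dimensional orthogonal complement, and let {aₙ} be a complex sequence such that Σₙ aₙ bₙ converges for every {bₙ} ∈ W. Then {aₙ} ∈ ℓ². -/
/-!
Since `Wᗮ` is finite-dimensional, every `b ∈ ℓ²` differs from an element of `W` by a finitely
supported sequence: the orthogonal projection onto `Wᗮ` maps the dense subspace of finitely
supported sequences onto a dense, hence closed, hence full subspace of `Wᗮ`. So `Σ aₙbₙ` converges
for every `b ∈ ℓ²`. Then `b ↦ Σ aₙbₙ` is a pointwise limit of continuous functionals, hence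
continuous by Banach–Steinhaus, and its Riesz representative `c` satisfies `aₙ = conj cₙ`.
-/

open Filter Topology

namespace Submodule

variable {𝕜 E : Type*} [RCLike 𝕜] [NormedAddCommGroup E] [InnerProductSpace 𝕜 E]

theorem sup_orthogonal_eq_top_of_dense (K : Submodule 𝕜 E) [FiniteDimensional 𝕜 K]
    {D : Submodule 𝕜 E} (hD : Dense (D : Set E)) : D ⊔ Kᗮ = ⊤ := by
  set P := K.orthogonalProjectionOnto
  have hP : Function.Surjective P := fun v => ⟨v, orthogonalProjectionOnto_mem_subspace_eq_self v⟩
  have hdense : Dense (D.map (P : E →ₗ[𝕜] K) : Set K) :=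
    hP.denseRange.dense_image P.continuous hD
  have hmap : D.map (P : E →ₗ[𝕜] K) = ⊤ := SetLike.coe_injective <|
    (D.map _).closed_of_finiteDimensional.closure_eq.symm.trans hdense.closure_eq
  rw [← ker_orthogonalProjectionOnto (K := K), ← comap_map_eq, hmap, comap_top]

end Submodule

namespace lp

variable {𝕜 ι : Type*} [RCLike 𝕜]

theorem dense_span_single [DecidableEq ι] :
    Dense ((Submodule.span 𝕜 (Set.range fun i => lp.single 2 i (1 : 𝕜)) :
      Submodule 𝕜 (lp (fun _ : ι => 𝕜) 2)) : Set (lp (fun _ : ι => 𝕜) 2)) := by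
  intro f
  refine mem_closure_of_tendsto (lp.hasSum_single ENNReal.ofNat_ne_top f)
    (Eventually.of_forall fun s => Submodule.sum_mem _ fun i _ => ?_)
  have hsingle : lp.single 2 i (f i) = f i • lp.single (E := fun _ : ι => 𝕜) 2 i 1 := by
    rw [← lp.single_smul, smul_eq_mul, mul_one]
  rw [hsingle]
  exact Submodule.smul_mem _ _ (Submodule.subset_span ⟨i, rfl⟩)

def summablePairing (a : ι → 𝕜) : Submodule 𝕜 (lp (fun _ : ι => 𝕜) 2) where
  carrier := {b | Summable fun i => a i * b i}
  add_mem' hb hc := by simpa [mul_add] using hb.add hc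
  zero_mem' := by simp
  smul_mem' c _ hb := by simpa [mul_left_comm] using hb.mul_left c

theorem single_mem_summablePairing [DecidableEq ι] (a : ι → 𝕜) (i : ι) (x : 𝕜) :
    lp.single 2 i x ∈ summablePairing a :=
  summable_of_ne_finset_zero (s := {i}) fun j hj => by
    simp [lp.single_apply, Finset.notMem_singleton.1 hj]

theorem memℓp_two_of_forall_summable_mul [Countable ι] {a : ι → 𝕜}
    (ha : ∀ b : lp (fun _ : ι => 𝕜) 2, Summable fun i => a i * b i) : Memℓp a 2 := by
  classical
  let φ : lp (fun _ : ι => 𝕜) 2 →L[𝕜] 𝕜 :=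
    continuousLinearMapOfTendsto (l := atTop)
      (fun s : Finset ι => ∑ i ∈ s, a i • lp.evalCLM 𝕜 (fun _ => 𝕜) 2 i)
      (f := fun b => ∑' i, a i * b i) <| tendsto_pi_nhds.2 fun b => by
        simpa [lp.evalCLM, HasSum] using (ha b).hasSum
  have hφ : ∀ b, φ b = ∑' i, a i * b i := fun _ => rfl
  set c := (InnerProductSpace.toDual 𝕜 _).symm φ
  have hc : a = star ⇑c := funext fun i => by
    have hci := InnerProductSpace.toDual_symm_apply (x := lp.single 2 i (1 : 𝕜)) (y := φ)
    rw [lp.inner_single_right] at hci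
    simpa [hφ, lp.single_apply, Pi.single_apply, RCLike.inner_apply] using hci.symm
  rw [hc]
  exact (lp.memℓp c).star_mem

end lp

/-- Let `W` be a closed subspace of `ℓ²` with finite-dimensional orthogonal complement, and
let `{aₙ}` be a complex sequence such that `Σₙ aₙbₙ` converges for every `{bₙ} ∈ W`.
Then `{aₙ} ∈ ℓ²`. -/
theorem stmt11 (W : Submodule ℂ (lp (fun _ : ℕ => ℂ) 2))
    (hWclosed : IsClosed (W : Set (lp (fun _ : ℕ => ℂ) 2)))
    (hfin : FiniteDimensional ℂ ↥Wᗮ)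
    (a : ℕ → ℂ)
    (ha : ∀ b ∈ W, Summable fun n => a n * b n) :
    Memℓp a 2 := by
  have : CompleteSpace W := hWclosed.completeSpace_coe
  have hle : Submodule.span ℂ (Set.range fun n => lp.single 2 n (1 : ℂ)) ⊔ Wᗮᗮ ≤
      lp.summablePairing a := by
    rw [Submodule.orthogonal_orthogonal]
    refine sup_le (Submodule.span_le.2 ?_) ha
    rintro _ ⟨n, rfl⟩
    exact lp.single_mem_summablePairing a n 1
  rw [Wᗮ.sup_orthogonal_eq_top_of_dense lp.dense_span_single, top_le_iff] at hle
  exact lp.memℓp_two_of_forall_summable_mul fun b =>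
    show b ∈ lp.summablePairing a from hle ▸ Submodule.mem_top
end

section
/- Let ξ, η be sequences with dom(η) dense, T = C_η*C_ξ, and assume ξ, η are lower semi-frames with R(C_ξ) ∔ R(C_η)^⊥ = ℓ². Then {(T⁻¹)* ξₙ} is a Bessel sequence of H, and g = Σₙ ⟨g, ηₙ⟩ (T⁻¹)* ξₙ with norm convergence for every g ∈ dom(η). -/
local notation "⟪" x ", " y "⟫" => @inner ℂ _ _ x y

/-!
Since `T⁻¹` is bounded and takes values in `dom T ⊆ dom C_ξ`, the operator `C_ξ T⁻¹` is
everywhere defined and closed, hence bounded by the closed graph theorem. It is the analysis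
operator of `(T⁻¹)* ξ`, which is therefore Bessel, and its adjoint is the synthesis operator
`c ↦ Σₙ cₙ (T⁻¹)* ξₙ`. For `g ∈ dom(η)` the defining identity of `T` gives
`⟨g, v⟩ = ⟨g, T T⁻¹ v⟩ = Σₙ ⟨g, ηₙ⟩ ⟨ξₙ, T⁻¹ v⟩ = ⟨C_η g, C_ξ T⁻¹ v⟩`, so synthesizing the
coefficients `C_η g` returns `g`.
-/

open scoped ENNReal lp

lemma memℓp_two_iff_summable_sq {ι : Type*} {E : ι → Type*} [∀ i, NormedAddCommGroup (E i)]
    {f : ∀ i, E i} : Memℓp f 2 ↔ Summable fun i => ‖f i‖ ^ 2 := by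
  rw [memℓp_gen_iff (by norm_num)]
  norm_num

namespace ContinuousLinearMap

section lpPi

variable {𝕜 E ι : Type*} {F : ι → Type*} [NontriviallyNormedField 𝕜]
  [NormedAddCommGroup E] [NormedSpace 𝕜 E] [CompleteSpace E]
  [∀ i, NormedAddCommGroup (F i)] [∀ i, NormedSpace 𝕜 (F i)] [∀ i, CompleteSpace (F i)]
  {p : ℝ≥0∞} [Fact (1 ≤ p)]

noncomputable def lpPi (φ : ∀ i, E →L[𝕜] F i)
    (hφ : ∀ x, Memℓp (fun i => φ i x) p) : E →L[𝕜] lp F p :=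
  ofSeqClosedGraph
    (g := { toFun := fun x => ⟨fun i => φ i x, hφ x⟩
            map_add' := fun x y => lp.ext <| funext fun i => map_add (φ i) x y
            map_smul' := fun c x => lp.ext <| funext fun i => map_smul (φ i) c x })
    fun _ x y hu hy => lp.ext <| funext fun i =>
      tendsto_nhds_unique (((lp.lipschitzWith_one_eval p i).continuous.tendsto y).comp hy)
        (((φ i).continuous.tendsto x).comp hu)

end lpPi

section IsAnalysisOperator

variable {𝕜 H ι : Type*} [RCLike 𝕜] [NormedAddCommGroup H] [InnerProductSpace 𝕜 H]

def IsAnalysisOperator (C : H →L[𝕜] ℓ²(ι, 𝕜)) (x : ι → H) : Prop :=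
  ∀ f i, C f i = inner 𝕜 (x i) f

namespace IsAnalysisOperator

variable {x : ι → H} {C : H →L[𝕜] ℓ²(ι, 𝕜)}

lemma hasSum_norm_inner_sq (hC : C.IsAnalysisOperator x) (f : H) :
    HasSum (fun i => ‖inner 𝕜 (x i) f‖ ^ 2) (‖C f‖ ^ 2) := by
  have h := lp.hasSum_norm (p := 2) (by norm_num) (C f)
  simpa only [ENNReal.toReal_ofNat, Real.rpow_two, hC f] using h

lemma tsum_norm_inner_sq_le (hC : C.IsAnalysisOperator x) (f : H) :
    ∑' i, ‖inner 𝕜 (x i) f‖ ^ 2 ≤ ‖C‖ ^ 2 * ‖f‖ ^ 2 := by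
  rw [(hC.hasSum_norm_inner_sq f).tsum_eq, ← mul_pow]
  gcongr
  exact C.le_opNorm f

lemma hasSum_smul_adjoint [CompleteSpace H] (hC : C.IsAnalysisOperator x) (c : ℓ²(ι, 𝕜)) :
    HasSum (fun i => c i • x i) (C.adjoint c) := by
  classical
  have hsingle : ∀ i, C.adjoint (lp.single 2 i (c i)) = c i • x i := fun i =>
    ext_inner_right 𝕜 fun v => by
      rw [C.adjoint_inner_left, lp.inner_single_left, hC, inner_smul_left]
      exact RCLike.inner_apply' _ _
  simpa only [hsingle] using C.adjoint.hasSum (lp.hasSum_single ENNReal.ofNat_ne_top c)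

end IsAnalysisOperator

end IsAnalysisOperator

end ContinuousLinearMap

theorem stmt13_general {H : Type*} [NormedAddCommGroup H] [InnerProductSpace ℂ H] [CompleteSpace H]
    (ξ η : ℕ → H)
    (domT : Set H) (T : H → H)
    (hT1 : ∀ f ∈ domT, (Summable fun n => ‖⟪ξ n, f⟫‖ ^ 2) ∧
      ∀ g : H, (Summable fun n => ‖⟪η n, g⟫‖ ^ 2) →
        HasSum (fun n => ⟪ξ n, f⟫ * ⟪g, η n⟫) ⟪g, T f⟫)
    (Tinv : H →L[ℂ] H)
    (hTinv2 : ∀ h : H, Tinv h ∈ domT ∧ T (Tinv h) = h) :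
    (∃ B > (0 : ℝ), ∀ f : H,
      (Summable fun n => ‖⟪(ContinuousLinearMap.adjoint Tinv) (ξ n), f⟫‖ ^ 2) ∧
      ∑' n, ‖⟪(ContinuousLinearMap.adjoint Tinv) (ξ n), f⟫‖ ^ 2 ≤ B * ‖f‖ ^ 2) ∧
    ∀ g : H, (Summable fun n => ‖⟪η n, g⟫‖ ^ 2) →
      HasSum (fun n => ⟪η n, g⟫ • (ContinuousLinearMap.adjoint Tinv) (ξ n)) g := by
  have hmem : ∀ f, Memℓp (fun n => ⟪ξ n, Tinv f⟫) 2 := fun f =>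
    memℓp_two_iff_summable_sq.2 (hT1 _ (hTinv2 f).1).1
  set C := ContinuousLinearMap.lpPi (fun n => (innerSL ℂ (ξ n)).comp Tinv) hmem
  have hC : C.IsAnalysisOperator fun n => Tinv.adjoint (ξ n) := fun f n =>
    (Tinv.adjoint_inner_left f (ξ n)).symm
  refine ⟨⟨‖C‖ ^ 2 + 1, by positivity, fun f =>
    ⟨(hC.hasSum_norm_inner_sq f).summable, ?_⟩⟩, fun g hg => ?_⟩
  · exact (hC.tsum_norm_inner_sq_le f).trans (by gcongr; linarith)
  · let c : ℓ²(ℕ, ℂ) := ⟨fun n => ⟪η n, g⟫, memℓp_two_iff_summable_sq.2 hg⟩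
    have hsynth : C.adjoint c = g := ext_inner_right ℂ fun v => by
      have hT : HasSum (fun n => ⟪ξ n, Tinv v⟫ * ⟪g, η n⟫) ⟪g, v⟫ := by
        simpa only [(hTinv2 v).2] using (hT1 _ (hTinv2 v).1).2 g hg
      rw [C.adjoint_inner_left]
      have hterm : ∀ n, inner ℂ (c n) (C v n) = ⟪ξ n, Tinv v⟫ * ⟪g, η n⟫ := fun n => by
        rw [RCLike.inner_apply', mul_comm]
        exact congrArg (C v n * ·) (inner_conj_symm g (η n))
      exact (lp.hasSum_inner c (C v)).unique (by simpa only [hterm] using hT)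
    have hsum := hC.hasSum_smul_adjoint c
    rwa [hsynth] at hsum

/-- Let `ξ, η` be lower semi-frames with `dom(η)` dense, `R(C_ξ) ∔ R(C_η)^⊥ = ℓ²`, and let
`T = C_η*C_ξ` be the associated operator, with bounded inverse `T⁻¹`. Then `{(T⁻¹)*ξₙ}` is
a Bessel sequence of `H` and `g = Σₙ ⟨g,ηₙ⟩ (T⁻¹)*ξₙ` in norm for every `g ∈ dom(η)`. -/
theorem stmt13 {H : Type*} [NormedAddCommGroup H] [InnerProductSpace ℂ H] [CompleteSpace H]
    (ξ η : ℕ → H)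
    (hηdense : Dense {g : H | Summable fun n => ‖⟪η n, g⟫‖ ^ 2})
    (hξlow : ∃ A > (0 : ℝ), ∀ f : H, (Summable fun n => ‖⟪ξ n, f⟫‖ ^ 2) →
      A * ‖f‖ ^ 2 ≤ ∑' n, ‖⟪ξ n, f⟫‖ ^ 2)
    (hηlow : ∃ A > (0 : ℝ), ∀ g : H, (Summable fun n => ‖⟪η n, g⟫‖ ^ 2) →
      A * ‖g‖ ^ 2 ≤ ∑' n, ‖⟪η n, g⟫‖ ^ 2)
    (hdirect1 : ∀ c : lp (fun _ : ℕ => ℂ) 2,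
      c ∈ {c : lp (fun _ : ℕ => ℂ) 2 | ∃ f : H, (Summable fun n => ‖⟪ξ n, f⟫‖ ^ 2) ∧
        ∀ n, c n = ⟪ξ n, f⟫} →
      c ∈ {c : lp (fun _ : ℕ => ℂ) 2 | ∀ d : lp (fun _ : ℕ => ℂ) 2,
        (∃ g : H, (Summable fun n => ‖⟪η n, g⟫‖ ^ 2) ∧ ∀ n, d n = ⟪η n, g⟫) → ⟪d, c⟫ = 0} →
      c = 0)
    (hdirect2 : ∀ c : lp (fun _ : ℕ => ℂ) 2,
      ∃ u ∈ {c : lp (fun _ : ℕ => ℂ) 2 | ∃ f : H, (Summable fun n => ‖⟪ξ n, f⟫‖ ^ 2) ∧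
          ∀ n, c n = ⟪ξ n, f⟫},
      ∃ v ∈ {c : lp (fun _ : ℕ => ℂ) 2 | ∀ d : lp (fun _ : ℕ => ℂ) 2,
          (∃ g : H, (Summable fun n => ‖⟪η n, g⟫‖ ^ 2) ∧ ∀ n, d n = ⟪η n, g⟫) → ⟪d, c⟫ = 0},
        c = u + v)
    (domT : Set H) (T : H → H)
    (hT1 : ∀ f ∈ domT, (Summable fun n => ‖⟪ξ n, f⟫‖ ^ 2) ∧
      ∀ g : H, (Summable fun n => ‖⟪η n, g⟫‖ ^ 2) →
        HasSum (fun n => ⟪ξ n, f⟫ * ⟪g, η n⟫) ⟪g, T f⟫)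
    (hT2 : ∀ f : H, (Summable fun n => ‖⟪ξ n, f⟫‖ ^ 2) → ∀ h : H,
      (∀ g : H, (Summable fun n => ‖⟪η n, g⟫‖ ^ 2) →
        HasSum (fun n => ⟪ξ n, f⟫ * ⟪g, η n⟫) ⟪g, h⟫) → f ∈ domT ∧ T f = h)
    (Tinv : H →L[ℂ] H) (hTinv1 : ∀ f ∈ domT, Tinv (T f) = f)
    (hTinv2 : ∀ h : H, Tinv h ∈ domT ∧ T (Tinv h) = h) :
    (∃ B > (0 : ℝ), ∀ f : H,
      (Summable fun n => ‖⟪(ContinuousLinearMap.adjoint Tinv) (ξ n), f⟫‖ ^ 2) ∧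
      ∑' n, ‖⟪(ContinuousLinearMap.adjoint Tinv) (ξ n), f⟫‖ ^ 2 ≤ B * ‖f‖ ^ 2) ∧
    ∀ g : H, (Summable fun n => ‖⟪η n, g⟫‖ ^ 2) →
      HasSum (fun n => ⟪η n, g⟫ • (ContinuousLinearMap.adjoint Tinv) (ξ n)) g :=
  stmt13_general ξ η domT T hT1 Tinv hTinv2
end

section
/- With the setup of a Riesz basis φₙ = Veₙ (V ∈ B(H) bijective), its canonical dual ψₙ = (V*)⁻¹eₙ, and a complex sequence {αₙ}, the operator H^α_{ψ,φ} defined by H^α f = Σₙ αₙ ⟨f,φₙ⟩ψₙ on dom(H^α) = {f ∈ H : Σₙ |αₙ|²|⟨f,φₙ⟩|² < ∞} is densely defined and closed, and its resolvent set equals the complement of the closure of {αₙ : n ∈ ℕ} in ℂ. -/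
/-!
Write `U f = (⟪φᵢ, f⟫)ᵢ`. Since `⟪φᵢ, f⟫ = ⟪eᵢ, V* f⟫`, `U` is the isomorphism `V*` followed by
the coordinates in the orthonormal basis, so `U : H ≃ ℓ²` is bounded with bounded inverse, and
`U⁻¹ eᵢ = (V*)⁻¹ eᵢ = ψᵢ`. Hence `H^α = U⁻¹ M_α U` for the maximal multiplication operator
`M_α` on `ℓ²`, and all three claims are transported from `M_α`: finitely supported sequences
are dense in its domain, its graph is closed coordinatewise, `U⁻¹ M_{(α - λ)⁻¹} U` is the
resolvent when `α - λ` is bounded away from `0`, and conversely the eigenvectors `ψᵢ` force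
`‖R‖ · |αᵢ - λ| ≥ 1` for any bounded left inverse `R` of `H^α - λ`.
-/

open Filter ENNReal
open scoped lp

local notation "⟪" x ", " y "⟫" => @inner ℂ _ _ x y

theorem summable_norm_sq_iff_memℓp_two {ι : Type*} {E : ι → Type*}
    [∀ i, NormedAddCommGroup (E i)] {f : ∀ i, E i} :
    (Summable fun i => ‖f i‖ ^ 2) ↔ Memℓp f 2 := by
  rw [memℓp_gen_iff (by norm_num)]
  norm_num

theorem notMem_closure_range_iff_exists_le_norm_sub {ι E : Type*} [SeminormedAddCommGroup E]
    (α : ι → E) (lam : E) :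
    lam ∉ closure (Set.range α) ↔ ∃ δ > 0, ∀ i, δ ≤ ‖α i - lam‖ := by
  simp [Metric.mem_closure_range_iff, dist_eq_norm, norm_sub_rev]

theorem dense_setOf_summable_mul {ι : Type*} (α : ι → ℂ) :
    Dense {w : ℓ²(ι, ℂ) | Summable fun i => ‖α i * w i‖ ^ 2} := by
  classical
  refine fun w => mem_closure_of_tendsto (lp.hasSum_single ofNat_ne_top w)
    (Eventually.of_forall fun s => summable_of_ne_finset_zero (s := s) fun j hj => ?_)
  rw [lp.coeFn_sum, Finset.sum_apply, Finset.sum_eq_zero, mul_zero, norm_zero,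
    zero_pow two_ne_zero]
  exact fun i hi => lp.single_apply_ne 2 i _ (ne_of_mem_of_not_mem hi hj).symm

namespace ContinuousLinearEquiv

section Adjoint

variable {𝕜 E F : Type*} [RCLike 𝕜] [NormedAddCommGroup E] [InnerProductSpace 𝕜 E]
  [CompleteSpace E] [NormedAddCommGroup F] [InnerProductSpace 𝕜 F] [CompleteSpace F]

noncomputable def adjoint (V : E ≃L[𝕜] F) : F ≃L[𝕜] E :=
  equivOfInverse (V : E →L[𝕜] F).adjoint (V.symm : F →L[𝕜] E).adjoint
    (fun x => by
      rw [← ContinuousLinearMap.comp_apply, ← ContinuousLinearMap.adjoint_comp,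
        coe_comp_coe_symm, ContinuousLinearMap.adjoint_id, ContinuousLinearMap.id_apply])
    (fun x => by
      rw [← ContinuousLinearMap.comp_apply, ← ContinuousLinearMap.adjoint_comp,
        coe_symm_comp_coe, ContinuousLinearMap.adjoint_id, ContinuousLinearMap.id_apply])

@[simp] theorem adjoint_apply (V : E ≃L[𝕜] F) (x : F) :
    V.adjoint x = (V : E →L[𝕜] F).adjoint x := rfl

@[simp] theorem adjoint_symm_apply (V : E ≃L[𝕜] F) (x : E) :
    V.adjoint.symm x = (V.symm : F →L[𝕜] E).adjoint x := rfl

end Adjoint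

variable {ι H : Type*} [DecidableEq ι] [NormedAddCommGroup H] [NormedSpace ℂ H]
  (U : H ≃L[ℂ] ℓ²(ι, ℂ))

theorem hasSum_smul_symm_single (w : ℓ²(ι, ℂ)) :
    HasSum (fun i => w i • U.symm (lp.single 2 i 1)) (U.symm w) := by
  have h := (lp.hasSum_single ofNat_ne_top w).mapL (U.symm : ℓ²(ι, ℂ) →L[ℂ] H)
  rw [coe_coe] at h
  convert h using 2 with i
  rw [← map_smul, ← lp.single_smul, smul_eq_mul, mul_one]

theorem summable_symm_single (α : ι → ℂ) (i : ι) :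
    Summable fun j => ‖α j * U (U.symm (lp.single 2 i 1)) j‖ ^ 2 :=
  summable_of_ne_finset_zero (s := {i}) fun j hj => by simp [Finset.notMem_singleton.1 hj]

end ContinuousLinearEquiv

section Multiplier

variable {ι H : Type*} [DecidableEq ι] [NormedAddCommGroup H] [NormedSpace ℂ H]
  {U : H ≃L[ℂ] ℓ²(ι, ℂ)} {α : ι → ℂ} {Hop : H → H}
  (hHop : ∀ f : H, (Summable fun i => ‖α i * U f i‖ ^ 2) →
    HasSum (fun i => (α i * U f i) • U.symm (lp.single 2 i 1)) (Hop f))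
include hHop

theorem apply_hop_apply {f : H} (hf : Summable fun i => ‖α i * U f i‖ ^ 2) (i : ι) :
    U (Hop f) i = α i * U f i := by
  let w : ℓ²(ι, ℂ) := ⟨fun i => α i * U f i, summable_norm_sq_iff_memℓp_two.1 hf⟩
  rw [(hHop f hf).unique (U.hasSum_smul_symm_single w), U.apply_symm_apply]

theorem summable_and_hop_eq_of_tendsto {F : ℕ → H} {f h : H}
    (hF : ∀ k, Summable fun i => ‖α i * U (F k) i‖ ^ 2)
    (hFf : Tendsto F atTop (nhds f)) (hFh : Tendsto (fun k => Hop (F k)) atTop (nhds h)) :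
    (Summable fun i => ‖α i * U f i‖ ^ 2) ∧ Hop f = h := by
  have hcoeff : (fun i => α i * U f i) = U h := by
    funext i
    have hcont : Continuous fun g : H => U g i :=
      (continuous_apply i).comp (lp.uniformContinuous_coe.continuous.comp U.continuous)
    refine tendsto_nhds_unique ?_ ((hcont.tendsto h).comp hFh)
    simpa only [Function.comp_def, apply_hop_apply hHop (hF _)] using
      ((hcont.tendsto f).comp hFf).const_mul (α i)
  have hf : Summable fun i => ‖α i * U f i‖ ^ 2 := by
    rw [summable_norm_sq_iff_memℓp_two, hcoeff]
    exact lp.memℓp (U h)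
  refine ⟨hf, U.injective (lp.ext (funext fun i => ?_))⟩
  rw [apply_hop_apply hHop hf, ← hcoeff]

theorem hop_symm_single (i : ι) :
    Hop (U.symm (lp.single 2 i 1)) = α i • U.symm (lp.single 2 i 1) := by
  have hdom := U.summable_symm_single α i
  refine U.injective (lp.ext (funext fun j => ?_))
  rw [apply_hop_apply hHop hdom, map_smul, U.apply_symm_apply, lp.coeFn_smul, Pi.smul_apply,
    smul_eq_mul]
  by_cases hji : j = i
  · rw [hji]
  · rw [lp.single_apply_ne 2 i _ hji, mul_zero, mul_zero]

theorem notMem_closure_range_of_leftInverse {lam : ℂ} (R : H →L[ℂ] H)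
    (hR : ∀ f : H, (Summable fun i => ‖α i * U f i‖ ^ 2) → R (Hop f - lam • f) = f) :
    lam ∉ closure (Set.range α) := by
  rw [notMem_closure_range_iff_exists_le_norm_sub]
  -- `‖R‖⁻¹` would do unless `R = 0`, which can only happen for empty `ι`.
  refine ⟨(‖R‖ + 1)⁻¹, by positivity, fun i => ?_⟩
  set ψ := U.symm (lp.single 2 i 1)
  have hψ : 0 < ‖ψ‖ := by
    rw [norm_pos_iff, ne_eq, EmbeddingLike.map_eq_zero_iff]
    intro h
    simpa using congr_arg (fun w : ℓ²(ι, ℂ) => w i) h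
  have heig : (α i - lam) • R ψ = ψ := by
    rw [← R.map_smul, sub_smul, ← hop_symm_single hHop i]
    exact hR ψ (U.summable_symm_single α i)
  have hψle : ‖ψ‖ ≤ ‖α i - lam‖ * ‖R‖ * ‖ψ‖ := calc
    ‖ψ‖ = ‖α i - lam‖ * ‖R ψ‖ := by rw [← norm_smul, heig]
    _ ≤ ‖α i - lam‖ * (‖R‖ * ‖ψ‖) := by gcongr; exact R.le_opNorm ψ
    _ = ‖α i - lam‖ * ‖R‖ * ‖ψ‖ := (mul_assoc _ _ _).symm
  have h1 : 1 ≤ ‖α i - lam‖ * ‖R‖ := le_of_mul_le_mul_right (by rwa [one_mul]) hψ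
  rw [inv_le_iff_one_le_mul₀ (by positivity)]
  nlinarith [norm_nonneg (α i - lam)]

theorem exists_resolvent_of_notMem_closure_range {lam : ℂ}
    (hlam : lam ∉ closure (Set.range α)) :
    ∃ R : H →L[ℂ] H,
      (∀ f : H, (Summable fun i => ‖α i * U f i‖ ^ 2) → R (Hop f - lam • f) = f) ∧
      (∀ h : H, (Summable fun i => ‖α i * U (R h) i‖ ^ 2) ∧ Hop (R h) - lam • R h = h) := by
  obtain ⟨δ, hδ, hαδ⟩ := (notMem_closure_range_iff_exists_le_norm_sub α lam).1 hlam
  have hinv : ∀ i, (α i - lam) * (α i - lam)⁻¹ = 1 := fun i =>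
    mul_inv_cancel₀ (norm_pos_iff.1 (hδ.trans_le (hαδ i)))
  have hbound : ∀ i, ‖ContinuousLinearMap.mul ℂ ℂ (α i - lam)⁻¹‖ ≤ δ⁻¹ := fun i =>
    (ContinuousLinearMap.opNorm_mul_apply_le _ _ _).trans
      (by rw [norm_inv]; exact inv_anti₀ hδ (hαδ i))
  let R : H →L[ℂ] H := (U.symm : ℓ²(ι, ℂ) →L[ℂ] H) ∘L
    lp.mapCLM 2 (fun i => ContinuousLinearMap.mul ℂ ℂ (α i - lam)⁻¹) (inv_nonneg.2 hδ.le) hbound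
    ∘L (U : H →L[ℂ] ℓ²(ι, ℂ))
  have hR : ∀ h i, U (R h) i = (α i - lam)⁻¹ * U h i := fun h i => by simp [R]
  refine ⟨R, fun f hf => U.injective (lp.ext (funext fun i => ?_)), fun h => ?_⟩
  · simp only [hR, map_sub, map_smul, lp.coeFn_sub, lp.coeFn_smul, Pi.sub_apply, Pi.smul_apply,
      smul_eq_mul, apply_hop_apply hHop hf]
    linear_combination U f i * hinv i
  have hcoeff : (fun i => α i * U (R h) i) = ⇑(U h + lam • U (R h)) := funext fun i => by
    simp only [hR, lp.coeFn_add, lp.coeFn_smul, Pi.add_apply, Pi.smul_apply, smul_eq_mul]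
    linear_combination U h i * hinv i
  have hdom : Summable fun i => ‖α i * U (R h) i‖ ^ 2 := by
    rw [summable_norm_sq_iff_memℓp_two, hcoeff]
    exact lp.memℓp _
  refine ⟨hdom, U.injective (lp.ext (funext fun i => ?_))⟩
  have hcoeff_i := congr_fun hcoeff i
  simp only [lp.coeFn_add, lp.coeFn_smul, Pi.add_apply, Pi.smul_apply, smul_eq_mul] at hcoeff_i
  simp only [map_sub, map_smul, lp.coeFn_sub, lp.coeFn_smul, Pi.sub_apply, Pi.smul_apply,
    smul_eq_mul, apply_hop_apply hHop hdom, hcoeff_i]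
  ring

end Multiplier

namespace HilbertBasis

variable {ι 𝕜 E F : Type*} [RCLike 𝕜] [NormedAddCommGroup E] [InnerProductSpace 𝕜 E]
  [CompleteSpace E] [NormedAddCommGroup F] [InnerProductSpace 𝕜 F] [CompleteSpace F]
  (b : HilbertBasis ι 𝕜 E) (V : E ≃L[𝕜] F)

noncomputable def rieszAnalysis : F ≃L[𝕜] ℓ²(ι, 𝕜) :=
  V.adjoint.trans b.repr.toContinuousLinearEquiv

theorem rieszAnalysis_apply_apply (f : F) (i : ι) :
    b.rieszAnalysis V f i = inner 𝕜 (V (b i)) f := by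
  simp [rieszAnalysis, b.repr_apply_apply, ContinuousLinearMap.adjoint_inner_right]

theorem rieszAnalysis_symm_single [DecidableEq ι] (i : ι) :
    (b.rieszAnalysis V).symm (lp.single 2 i 1) = (V.symm : F →L[𝕜] E).adjoint (b i) := by
  simp [rieszAnalysis]

end HilbertBasis

/-- Let `φₙ = Veₙ` be a Riesz basis (`V` bounded with bounded inverse, `{eₙ}` an ONB),
`ψₙ = (V*)⁻¹eₙ` its canonical dual and `α` a complex sequence. The operator
`H^α_{ψ,φ} f = Σₙ αₙ⟨f,φₙ⟩ψₙ` on `dom(H^α) = {f : Σₙ |αₙ|²|⟨f,φₙ⟩|² < ∞}` is densely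
defined and closed, and its resolvent set is the complement of the closure of `{αₙ}`. -/
theorem stmt15 {H : Type*} [NormedAddCommGroup H] [InnerProductSpace ℂ H] [CompleteSpace H]
    (e : ℕ → H) (he : Orthonormal ℂ e)
    (hetotal : (Submodule.span ℂ (Set.range e)).topologicalClosure = ⊤)
    (V : H ≃L[ℂ] H) (α : ℕ → ℂ) (φ ψ : ℕ → H)
    (hφ : ∀ n, φ n = V (e n))
    (hψ : ∀ n, ψ n = ContinuousLinearMap.adjoint (V.symm : H →L[ℂ] H) (e n))
    (Hop : H → H)
    (hHop : ∀ f : H, (Summable fun n => ‖α n * ⟪φ n, f⟫‖ ^ 2) →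
      HasSum (fun n => (α n * ⟪φ n, f⟫) • ψ n) (Hop f)) :
    -- densely defined
    Dense {f : H | Summable fun n => ‖α n * ⟪φ n, f⟫‖ ^ 2} ∧
    -- closed
    (∀ (F : ℕ → H) (f h : H), (∀ k, Summable fun n => ‖α n * ⟪φ n, F k⟫‖ ^ 2) →
      Tendsto F atTop (nhds f) → Tendsto (fun k => Hop (F k)) atTop (nhds h) →
      (Summable fun n => ‖α n * ⟪φ n, f⟫‖ ^ 2) ∧ Hop f = h) ∧
    -- resolvent set = complement of the closure of {αₙ}
    (∀ lam : ℂ, lam ∉ closure (Set.range α) ↔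
      ∃ Rlam : H →L[ℂ] H,
        (∀ f : H, (Summable fun n => ‖α n * ⟪φ n, f⟫‖ ^ 2) → Rlam (Hop f - lam • f) = f) ∧
        (∀ h : H, (Summable fun n => ‖α n * ⟪φ n, Rlam h⟫‖ ^ 2) ∧
          Hop (Rlam h) - lam • Rlam h = h)) := by
  set b := HilbertBasis.mk he hetotal.ge
  set U := b.rieszAnalysis V
  have hφU : ∀ f n, ⟪φ n, f⟫ = U f n := fun f n => by
    rw [b.rieszAnalysis_apply_apply, HilbertBasis.coe_mk, hφ]
  obtain rfl : ψ = fun n => U.symm (lp.single 2 n 1) := funext fun n => by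
    rw [hψ, b.rieszAnalysis_symm_single, HilbertBasis.coe_mk]
  simp only [hφU] at hHop ⊢
  refine ⟨(dense_setOf_summable_mul α).preimage U.toHomeomorph.isOpenMap,
    fun F f h => summable_and_hop_eq_of_tendsto hHop, fun lam => ⟨?_, ?_⟩⟩
  · exact exists_resolvent_of_notMem_closure_range hHop
  · rintro ⟨R, hR, -⟩
    exact notMem_closure_range_of_leftInverse hHop R hR
end

section
/- Let S be a closed densely defined operator on H with domain D, and equip D with the graph inner product ⟨f,g⟩_S = ⟨f,g⟩ + ⟨Sf,Sg⟩, making D a Hilbert space. If {eₙ} is an orthonormal basis of (D, ⟨·,·⟩_S) contained in dom(S*S), then the sequence ξₙ = (I + S*S)eₙ is a lower semi-frame of H with dom(ξ) ⊇ D; more precisely Σₙ |⟨f,ξₙ⟩|² = ‖f‖_S² ≥ ‖f‖² for all f ∈ D. -/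
/-!
The graph inner product `⟪f, g⟫ + ⟪S f, S g⟫` on `dom S` is the restriction of the `L²` inner
product of `H × H` to the graph of `S`, and closedness of `S` makes the graph a closed, hence
complete, subspace. In it the vectors `(eₙ, S eₙ)` are orthonormal with trivial orthogonal
complement, i.e. they form a Hilbert basis, and `⟪ξₙ, f⟫` is the coefficient of `(f, S f)` along
`(eₙ, S eₙ)`. The claimed identity is Parseval's identity for this basis.
-/

open Filter

local notation "⟪" x ", " y "⟫" => @inner ℂ _ _ x y

open Topology

section Parseval

variable {ι 𝕜 E : Type*} [RCLike 𝕜] [NormedAddCommGroup E] [InnerProductSpace 𝕜 E]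

theorem HilbertBasis.hasSum_norm_sq_inner (b : HilbertBasis ι 𝕜 E) (x : E) :
    HasSum (fun i => ‖inner 𝕜 (b i) x‖ ^ 2) (‖x‖ ^ 2) := by
  simpa only [b.repr_apply_apply, LinearIsometryEquiv.norm_map, ENNReal.toReal_ofNat,
    Real.rpow_two] using lp.hasSum_norm (p := 2) (by norm_num) (b.repr x)

theorem Orthonormal.hasSum_norm_sq_inner_of_total [CompleteSpace E] {v : ι → E}
    (hv : Orthonormal 𝕜 v)
    (htotal : ∀ x, (∀ i, inner 𝕜 (v i) x = 0) → x = 0) (x : E) :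
    HasSum (fun i => ‖inner 𝕜 (v i) x‖ ^ 2) (‖x‖ ^ 2) := by
  have hsp : (Submodule.span 𝕜 (Set.range v))ᗮ = ⊥ := by
    refine (Submodule.eq_bot_iff _).2 fun y hy => htotal y fun i => ?_
    exact (Submodule.mem_orthogonal _ _).1 hy _ (Submodule.subset_span ⟨i, rfl⟩)
  simpa only [HilbertBasis.coe_mkOfOrthogonalEqBot] using
    (HilbertBasis.mkOfOrthogonalEqBot hv hsp).hasSum_norm_sq_inner x

end Parseval

section Graph

variable {𝕜 E F : Type*} [RCLike 𝕜] [NormedAddCommGroup E] [InnerProductSpace 𝕜 E]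
  [NormedAddCommGroup F] [InnerProductSpace 𝕜 F] {D : Set E} {S : E → F}

theorem apply_zero_of_map_smul (h0 : (0 : E) ∈ D)
    (hsmul : ∀ (c : 𝕜), ∀ f ∈ D, c • f ∈ D ∧ S (c • f) = c • S f) : S 0 = 0 := by
  simpa using (hsmul 0 0 h0).2

variable (h0 : (0 : E) ∈ D)
  (hadd : ∀ f ∈ D, ∀ g ∈ D, f + g ∈ D ∧ S (f + g) = S f + S g)
  (hsmul : ∀ (c : 𝕜), ∀ f ∈ D, c • f ∈ D ∧ S (c • f) = c • S f)

def graphSubmodule : Submodule 𝕜 (WithLp 2 (E × F)) where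
  carrier := {p | p.fst ∈ D ∧ S p.fst = p.snd}
  add_mem' := fun ⟨hx, hSx⟩ ⟨hy, hSy⟩ => by
    simp only [Set.mem_ofPred_eq, WithLp.add_fst, WithLp.add_snd, ← hSx, ← hSy]
    exact hadd _ hx _ hy
  zero_mem' := ⟨h0, apply_zero_of_map_smul h0 hsmul⟩
  smul_mem' := fun c _ ⟨hx, hSx⟩ => by
    simp only [Set.mem_ofPred_eq, WithLp.smul_fst, WithLp.smul_snd, ← hSx]
    exact hsmul c _ hx

theorem isClosed_graphSubmodule
    (hclosed : ∀ (u : ℕ → E) (f : E) (g : F), (∀ k, u k ∈ D) →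
      Tendsto u atTop (𝓝 f) → Tendsto (fun k => S (u k)) atTop (𝓝 g) → f ∈ D ∧ S f = g) :
    IsClosed (graphSubmodule h0 hadd hsmul : Set (WithLp 2 (E × F))) := by
  refine IsSeqClosed.isClosed fun {u p} hu hlim => ?_
  have hfst := ((WithLp.continuous_fst 2 E F).tendsto p).comp hlim
  have hsnd := ((WithLp.continuous_snd 2 E F).tendsto p).comp hlim
  refine hclosed (fun k => (u k).fst) p.fst p.snd (fun k => (hu k).1) hfst ?_
  simpa only [Function.comp_def, (hu _).2] using hsnd

variable {h0 hadd hsmul}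

def toGraph {f : E} (hf : f ∈ D) : graphSubmodule h0 hadd hsmul :=
  ⟨WithLp.toLp 2 (f, S f), hf, rfl⟩

theorem inner_toGraph {f g : E} (hf : f ∈ D) (hg : g ∈ D) :
    inner 𝕜 (toGraph hf : graphSubmodule h0 hadd hsmul) (toGraph hg) =
      inner 𝕜 f g + inner 𝕜 (S f) (S g) :=
  rfl

theorem norm_sq_toGraph {f : E} (hf : f ∈ D) :
    ‖(toGraph hf : graphSubmodule h0 hadd hsmul)‖ ^ 2 = ‖f‖ ^ 2 + ‖S f‖ ^ 2 :=
  WithLp.prod_norm_sq_eq_of_L2 _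

theorem toGraph_fst (x : graphSubmodule h0 hadd hsmul) : toGraph x.2.1 = x := by
  refine Subtype.ext ?_
  simp only [toGraph, x.2.2]
  rfl

theorem graphSubmodule.eq_zero_of_fst_eq_zero (x : graphSubmodule h0 hadd hsmul)
    (hx : x.1.fst = 0) : x = 0 := by
  have hsnd : x.1.snd = 0 := by rw [← x.2.2, hx, apply_zero_of_map_smul h0 hsmul]
  exact Subtype.ext ((WithLp.ext_iff 2).2 (Prod.ext hx hsnd))

end Graph

theorem stmt16_general {H : Type*} [NormedAddCommGroup H] [InnerProductSpace ℂ H] [CompleteSpace H]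
    (domS : Set H) (S : H → H)
    (hadd : ∀ f ∈ domS, ∀ g ∈ domS, f + g ∈ domS ∧ S (f + g) = S f + S g)
    (hsmul : ∀ (c : ℂ), ∀ f ∈ domS, c • f ∈ domS ∧ S (c • f) = c • S f)
    (hclosed : ∀ (F : ℕ → H) (f h : H), (∀ k, F k ∈ domS) →
      Tendsto F atTop (nhds f) → Tendsto (fun k => S (F k)) atTop (nhds h) →
      f ∈ domS ∧ S f = h)
    (e : ℕ → H) (he : ∀ n, e n ∈ domS)
    (horth : ∀ n m, ⟪e n, e m⟫ + ⟪S (e n), S (e m)⟫ = if n = m then (1 : ℂ) else 0)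
    (htotal : ∀ f ∈ domS, (∀ n, ⟪e n, f⟫ + ⟪S (e n), S f⟫ = 0) → f = 0)
    (ξ : ℕ → H)
    (hξ : ∀ n, ∀ f ∈ domS, ⟪ξ n, f⟫ = ⟪e n, f⟫ + ⟪S (e n), S f⟫) :
    (∀ f ∈ domS, HasSum (fun n => ‖⟪ξ n, f⟫‖ ^ 2) (‖f‖ ^ 2 + ‖S f‖ ^ 2)) ∧
    domS ⊆ {f : H | Summable fun n => ‖⟪ξ n, f⟫‖ ^ 2} ∧
    (∀ f ∈ domS, ‖f‖ ^ 2 ≤ ∑' n, ‖⟪ξ n, f⟫‖ ^ 2) := by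
  have h0 : (0 : H) ∈ domS := by simpa using (hsmul 0 (e 0) (he 0)).1
  have : CompleteSpace (graphSubmodule h0 hadd hsmul) :=
    (isClosed_graphSubmodule h0 hadd hsmul hclosed).completeSpace_coe
  let v (n : ℕ) : graphSubmodule h0 hadd hsmul := toGraph (he n)
  have hv : Orthonormal ℂ v := orthonormal_iff_ite.2 horth
  have hv_total (x : graphSubmodule h0 hadd hsmul) (hx : ∀ n, ⟪v n, x⟫ = 0) : x = 0 := by
    rw [← toGraph_fst x] at hx
    simp only [v, inner_toGraph] at hx
    exact graphSubmodule.eq_zero_of_fst_eq_zero x (htotal _ x.2.1 hx)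
  have parseval (f : H) (hf : f ∈ domS) :
      HasSum (fun n => ‖⟪ξ n, f⟫‖ ^ 2) (‖f‖ ^ 2 + ‖S f‖ ^ 2) := by
    simpa only [v, inner_toGraph, norm_sq_toGraph, hξ _ f hf] using
      hv.hasSum_norm_sq_inner_of_total hv_total (toGraph hf)
  refine ⟨parseval, fun f hf => (parseval f hf).summable, fun f hf => ?_⟩
  rw [(parseval f hf).tsum_eq]
  exact le_add_of_nonneg_right (sq_nonneg _)

/-- Let `S` be a closed densely defined operator with domain `D`, endowed with the graph
inner product `⟨f,g⟩_S = ⟨f,g⟩ + ⟨Sf,Sg⟩`. If `{eₙ}` is an orthonormal basis of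
`(D, ⟨·,·⟩_S)` contained in `dom(S*S)` (encoded by: `ξₙ` satisfies
`⟨f,ξₙ⟩ = ⟨f,eₙ⟩_S` for all `f ∈ D`, i.e. `ξₙ = (I+S*S)eₙ`), then `ξ` is a lower
semi-frame of `H` on `D`: `D ⊆ dom(ξ)` and
`Σₙ |⟨f,ξₙ⟩|² = ‖f‖_S² ≥ ‖f‖²` for all `f ∈ D`. -/
theorem stmt16 {H : Type*} [NormedAddCommGroup H] [InnerProductSpace ℂ H] [CompleteSpace H]
    (domS : Set H) (S : H → H)
    (hadd : ∀ f ∈ domS, ∀ g ∈ domS, f + g ∈ domS ∧ S (f + g) = S f + S g)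
    (hsmul : ∀ (c : ℂ), ∀ f ∈ domS, c • f ∈ domS ∧ S (c • f) = c • S f)
    (hdense : Dense domS)
    (hclosed : ∀ (F : ℕ → H) (f h : H), (∀ k, F k ∈ domS) →
      Tendsto F atTop (nhds f) → Tendsto (fun k => S (F k)) atTop (nhds h) →
      f ∈ domS ∧ S f = h)
    (e : ℕ → H) (he : ∀ n, e n ∈ domS)
    (horth : ∀ n m, ⟪e n, e m⟫ + ⟪S (e n), S (e m)⟫ = if n = m then (1 : ℂ) else 0)
    (htotal : ∀ f ∈ domS, (∀ n, ⟪e n, f⟫ + ⟪S (e n), S f⟫ = 0) → f = 0)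
    (ξ : ℕ → H)
    (hξ : ∀ n, ∀ f ∈ domS, ⟪ξ n, f⟫ = ⟪e n, f⟫ + ⟪S (e n), S f⟫) :
    (∀ f ∈ domS, HasSum (fun n => ‖⟪ξ n, f⟫‖ ^ 2) (‖f‖ ^ 2 + ‖S f‖ ^ 2)) ∧
    domS ⊆ {f : H | Summable fun n => ‖⟪ξ n, f⟫‖ ^ 2} ∧
    (∀ f ∈ domS, ‖f‖ ^ 2 ≤ ∑' n, ‖⟪ξ n, f⟫‖ ^ 2) :=
  stmt16_general domS S hadd hsmul hclosed e he horth htotal ξ hξ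
end

section
/- Let {eₙ} be an ONB of H and V a densely defined operator with eₙ ∈ dom(V); set ξₙ = Veₙ and let V₀ be the restriction of V to the linear span of {eₙ}. Then dom(ξ) = dom(V₀*) and C_ξ f = {⟨V₀* f, eₙ⟩} for all f ∈ dom(V₀*); consequently dom(ξ) is dense if and only if V₀ is closable. -/
/-! If `f ∈ dom V₀*`, then `⟪Veₙ, f⟫ = ⟪eₙ, V₀* f⟫` are the Fourier coefficients of `V₀* f`, hence
square summable. Conversely, a square-summable sequence `⟪Veₙ, f⟫` is the coefficient sequence of
some `h` (Riesz–Fischer), and `⟪V₀ x, f⟫ = ⟪x, h⟫`, true for `x = eₙ`, extends to the span by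
linearity.

If `dom V₀*` is dense and `(0, y)` is a limit of points `(xₖ, V₀ xₖ)` of the graph, then
`⟪y, f⟫ = lim ⟪xₖ, V₀* f⟫ = 0` for all `f ∈ dom V₀*`, so `y = 0`. Conversely, every `(u, v)`
orthogonal to the graph has `v ∈ dom V₀*` (with `V₀* v = -u`), so for `y ⊥ dom V₀*` the point
`(0, y)` is orthogonal to the orthogonal complement of the graph, i.e. lies in its closure. -/

open Filter

local notation "⟪" x ", " y "⟫" => @inner ℂ _ _ x y

open Submodule Topology
open scoped InnerProductSpace

namespace LinearMap

variable {𝕜 E F : Type*} [RCLike 𝕜] [NormedAddCommGroup E] [InnerProductSpace 𝕜 E]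
  [NormedAddCommGroup F] [InnerProductSpace 𝕜 F] {M : Submodule 𝕜 E}

/-- `dom T*`, described by the existence of `T* f` rather than, as in `LinearPMap.adjointDomain`,
by continuity of `x ↦ ⟪f, T x⟫`. -/
def adjointDomain (T : M →ₗ[𝕜] F) : Submodule 𝕜 F where
  carrier := {f | ∃ h : E, ∀ x : M, ⟪T x, f⟫_𝕜 = ⟪(x : E), h⟫_𝕜}
  add_mem' := by
    rintro f g ⟨h, hf⟩ ⟨k, hg⟩
    exact ⟨h + k, fun x => by rw [inner_add_right, inner_add_right, hf, hg]⟩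
  zero_mem' := ⟨0, fun x => by rw [inner_zero_right, inner_zero_right]⟩
  smul_mem' := by
    rintro c f ⟨h, hf⟩
    exact ⟨c • h, fun x => by rw [inner_smul_right, inner_smul_right, hf]⟩

def IsSeqClosable (T : M →ₗ[𝕜] F) : Prop :=
  ∀ u : ℕ → M, Tendsto (fun k => (u k : E)) atTop (𝓝 0) →
    ∀ y : F, Tendsto (fun k => T (u k)) atTop (𝓝 y) → y = 0

def graphLp (T : M →ₗ[𝕜] F) : Submodule 𝕜 (WithLp 2 (E × F)) :=
  range ((WithLp.linearEquiv 2 𝕜 (E × F)).symm.toLinearMap ∘ₗ M.subtype.prod T)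

theorem inner_apply_eq_of_forall_mem_span {s : Set E} (T : span 𝕜 s →ₗ[𝕜] F) {f : F} {h : E}
    (hs : ∀ v (hv : v ∈ s), ⟪T ⟨v, subset_span hv⟩, f⟫_𝕜 = ⟪v, h⟫_𝕜) (x : span 𝕜 s) :
    ⟪T x, f⟫_𝕜 = ⟪(x : E), h⟫_𝕜 := by
  obtain ⟨x, hx⟩ := x
  induction hx using Submodule.span_induction with
  | mem v hv => exact hs v hv
  | zero =>
    rw [show (⟨0, zero_mem _⟩ : span 𝕜 s) = 0 from rfl, map_zero, Submodule.coe_zero,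
      inner_zero_left, inner_zero_left]
  | add x y hx hy ihx ihy =>
    rw [show (⟨x + y, add_mem hx hy⟩ : span 𝕜 s) = ⟨x, hx⟩ + ⟨y, hy⟩ from rfl, map_add,
      Submodule.coe_add, inner_add_left, inner_add_left, ihx, ihy]
  | smul c x hx ihx =>
    rw [show (⟨c • x, smul_mem _ c hx⟩ : span 𝕜 s) = c • ⟨x, hx⟩ from rfl, map_smul,
      Submodule.coe_smul, inner_smul_left, inner_smul_left, ihx]

theorem mem_adjointDomain_iff_summable [CompleteSpace E] {ι : Type*} {e : ι → E}
    (he : Orthonormal 𝕜 e) (hetotal : ⊤ ≤ (span 𝕜 (Set.range e)).topologicalClosure)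
    (T : span 𝕜 (Set.range e) →ₗ[𝕜] F) (f : F) :
    f ∈ T.adjointDomain ↔
      Summable fun i => ‖⟪T ⟨e i, subset_span (Set.mem_range_self i)⟩, f⟫_𝕜‖ ^ 2 := by
  constructor
  · rintro ⟨h, hfh⟩
    exact (he.inner_products_summable h).congr fun i => by rw [hfh]
  · intro hsum
    let b := HilbertBasis.mk he hetotal
    have hmem : Memℓp (fun i => ⟪T ⟨e i, subset_span (Set.mem_range_self i)⟩, f⟫_𝕜) 2 :=
      (memℓp_gen_iff (by norm_num)).2 (by simpa using hsum)
    -- Riesz–Fischer: the coefficients `⟪T eᵢ, f⟫` are those of a vector of `E`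
    refine ⟨b.repr.symm ⟨_, hmem⟩, T.inner_apply_eq_of_forall_mem_span ?_⟩
    rintro _ ⟨i, rfl⟩
    have hb (v : E) : b.repr v i = ⟪e i, v⟫_𝕜 := by rw [b.repr_apply_apply, HilbertBasis.coe_mk]
    rw [← hb, b.repr.apply_symm_apply]

variable (T : M →ₗ[𝕜] F)

theorem isSeqClosable_of_dense_adjointDomain (hd : Dense (T.adjointDomain : Set F)) :
    T.IsSeqClosable := by
  intro u hu y hy
  refine hd.eq_zero_of_inner_left 𝕜 fun f ⟨h, hfh⟩ => ?_
  have hlim : Tendsto (fun k => ⟪T (u k), f⟫_𝕜) atTop (𝓝 ⟪(0 : E), h⟫_𝕜) := by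
    simpa only [hfh] using hu.inner tendsto_const_nhds
  rw [inner_zero_left] at hlim
  exact tendsto_nhds_unique (hy.inner tendsto_const_nhds) hlim

theorem snd_mem_adjointDomain_of_mem_orthogonal_graphLp {q : WithLp 2 (E × F)}
    (hq : q ∈ T.graphLpᗮ) : q.snd ∈ T.adjointDomain := by
  refine ⟨-q.fst, fun x => ?_⟩
  have hx := (mem_orthogonal _ _).1 hq _ ⟨x, rfl⟩
  rw [WithLp.prod_inner_apply] at hx
  rw [inner_neg_right, eq_neg_iff_add_eq_zero, add_comm]
  exact hx

theorem toLp_zero_mem_closure_graphLp [CompleteSpace E] [CompleteSpace F] {y : F}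
    (hy : y ∈ T.adjointDomainᗮ) : WithLp.toLp 2 ((0 : E), y) ∈ closure (T.graphLp : Set _) := by
  rw [← topologicalClosure_coe, SetLike.mem_coe, ← orthogonal_orthogonal_eq_closure,
    mem_orthogonal]
  intro q hq
  rw [WithLp.prod_inner_apply]
  simpa using (mem_orthogonal _ _).1 hy _ (T.snd_mem_adjointDomain_of_mem_orthogonal_graphLp hq)

theorem IsSeqClosable.eq_zero_of_toLp_mem_closure_graphLp {T : M →ₗ[𝕜] F} (hT : T.IsSeqClosable)
    {y : F} (hy : WithLp.toLp 2 ((0 : E), y) ∈ closure (T.graphLp : Set _)) : y = 0 := by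
  obtain ⟨q, hq, hlim⟩ := mem_closure_iff_seq_limit.1 hy
  choose u hu using hq
  refine hT u ?_ y ?_
  · simpa [Function.comp_def, ← hu] using ((WithLp.continuous_fst 2 E F).tendsto _).comp hlim
  · simpa [Function.comp_def, ← hu] using ((WithLp.continuous_snd 2 E F).tendsto _).comp hlim

theorem dense_adjointDomain_iff_isSeqClosable [CompleteSpace E] [CompleteSpace F] :
    Dense (T.adjointDomain : Set F) ↔ T.IsSeqClosable := by
  refine ⟨T.isSeqClosable_of_dense_adjointDomain, fun hT => ?_⟩
  rw [dense_iff_topologicalClosure_eq_top, topologicalClosure_eq_top_iff, eq_bot_iff]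
  exact fun y hy => hT.eq_zero_of_toLp_mem_closure_graphLp (T.toLp_zero_mem_closure_graphLp hy)

end LinearMap

/-- Let `{eₙ}` be an ONB of `H`, `V` an operator defined (and linear) on `span{eₙ}`, and
`ξₙ = Veₙ`; let `V₀` be the restriction of `V` to `span{eₙ}`. Then
`dom(ξ) = dom(V₀*)`, `C_ξ f = {⟨V₀*f, eₙ⟩}` for `f ∈ dom(V₀*)`, and `dom(ξ)` is dense if
and only if `V₀` is closable. Here `f ∈ dom(V₀*)` with `V₀*f = h` is encoded by
`⟨V₀x, f⟩ = ⟨x, h⟩` for all `x ∈ span{eₙ}`. -/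
theorem stmt17 {H : Type*} [NormedAddCommGroup H] [InnerProductSpace ℂ H] [CompleteSpace H]
    (e : ℕ → H) (he : Orthonormal ℂ e)
    (hetotal : (Submodule.span ℂ (Set.range e)).topologicalClosure = ⊤)
    (V : H → H)
    (hVadd : ∀ x ∈ (Submodule.span ℂ (Set.range e) : Set H),
      ∀ y ∈ (Submodule.span ℂ (Set.range e) : Set H), V (x + y) = V x + V y)
    (hVsmul : ∀ (c : ℂ), ∀ x ∈ (Submodule.span ℂ (Set.range e) : Set H), V (c • x) = c • V x)
    (ξ : ℕ → H) (hξ : ∀ n, ξ n = V (e n)) :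
    -- dom(ξ) = dom(V₀*)
    ({f : H | Summable fun n => ‖⟪ξ n, f⟫‖ ^ 2}
      = {f : H | ∃ h : H, ∀ x ∈ (Submodule.span ℂ (Set.range e) : Set H),
          ⟪V x, f⟫ = ⟪x, h⟫}) ∧
    -- C_ξ f = {⟨V₀*f, eₙ⟩}
    (∀ f h : H, (∀ x ∈ (Submodule.span ℂ (Set.range e) : Set H), ⟪V x, f⟫ = ⟪x, h⟫) →
      ∀ n, ⟪ξ n, f⟫ = ⟪e n, h⟫) ∧
    -- dom(ξ) dense ↔ V₀ closable
    (Dense {f : H | Summable fun n => ‖⟪ξ n, f⟫‖ ^ 2} ↔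
      ∀ F : ℕ → H, (∀ k, F k ∈ (Submodule.span ℂ (Set.range e) : Set H)) →
        Tendsto F atTop (nhds 0) →
        ∀ h : H, Tendsto (fun k => V (F k)) atTop (nhds h) → h = 0) := by
  set M := span ℂ (Set.range e)
  let V₀ : M →ₗ[ℂ] H :=
    { toFun := fun x => V x
      map_add' := fun x y => hVadd x x.2 y y.2
      map_smul' := fun c x => hVsmul c x x.2 }
  have hdom_ξ : {f : H | Summable fun n => ‖⟪ξ n, f⟫‖ ^ 2} = V₀.adjointDomain := by
    simp_rw [hξ]
    exact Set.ext fun f => (V₀.mem_adjointDomain_iff_summable he hetotal.ge f).symm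
  have hdom_adjoint :
      {f : H | ∃ h : H, ∀ x ∈ (M : Set H), ⟪V x, f⟫ = ⟪x, h⟫} = V₀.adjointDomain :=
    Set.ext fun f => exists_congr fun h => ⟨fun hV x => hV x x.2, fun hV x hx => hV ⟨x, hx⟩⟩
  have hclosable : (∀ F : ℕ → H, (∀ k, F k ∈ (M : Set H)) → Tendsto F atTop (𝓝 0) →
      ∀ h : H, Tendsto (fun k => V (F k)) atTop (𝓝 h) → h = 0) ↔ V₀.IsSeqClosable :=
    ⟨fun hV u => hV (fun k => u k) fun k => (u k).2,
      fun hV F hF => hV fun k => ⟨F k, hF k⟩⟩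
  refine ⟨hdom_ξ.trans hdom_adjoint.symm,
    fun f h hfh n => hξ n ▸ hfh _ (subset_span ⟨n, rfl⟩), ?_⟩
  rw [hdom_ξ, hclosable]
  exact V₀.dense_adjointDomain_iff_isSeqClosable
end

section
/- Let ξ be a Bessel sequence of H with upper bound B and η a sequence such that Σₙ ⟨f,ξₙ⟩⟨ηₙ,g⟩ = ⟨f,g⟩ for all f,g ∈ H. Then η is a lower semi-frame with lower bound B⁻¹: ‖g‖² ≤ B Σₙ |⟨g,ηₙ⟩|² for all g ∈ H. -/
/-! Cauchy–Schwarz applied to the reproducing identity at `f = g` gives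
`‖g‖⁴ ≤ (Σ |⟨g,ξₙ⟩|²)(Σ |⟨g,ηₙ⟩|²) ≤ B ‖g‖² Σ |⟨g,ηₙ⟩|²`; divide by `‖g‖²`. -/

local notation "⟪" x ", " y "⟫" => @inner ℂ _ _ x y

theorem HasSum.norm_sq_le_tsum_mul_tsum {ι R : Type*} [SeminormedRing R] {a b : ι → R} {c : R}
    (h : HasSum (fun i => a i * b i) c) (ha : Summable fun i => ‖a i‖ ^ 2)
    (hb : Summable fun i => ‖b i‖ ^ 2) :
    ‖c‖ ^ 2 ≤ (∑' i, ‖a i‖ ^ 2) * ∑' i, ‖b i‖ ^ 2 := by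
  refine le_of_tendsto' (h.norm.pow 2) fun s => ?_
  calc ‖∑ i ∈ s, a i * b i‖ ^ 2 ≤ (∑ i ∈ s, ‖a i‖ * ‖b i‖) ^ 2 := by
        gcongr
        exact (norm_sum_le _ _).trans (Finset.sum_le_sum fun i _ => norm_mul_le _ _)
    _ ≤ (∑ i ∈ s, ‖a i‖ ^ 2) * ∑ i ∈ s, ‖b i‖ ^ 2 := Finset.sum_mul_sq_le_sq_mul_sq _ _ _
    _ ≤ (∑' i, ‖a i‖ ^ 2) * ∑' i, ‖b i‖ ^ 2 := by
        gcongr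
        exacts [ha.sum_le_tsum s fun i _ => by positivity,
          hb.sum_le_tsum s fun i _ => by positivity]

theorem stmt19_general {H : Type*} [NormedAddCommGroup H] [InnerProductSpace ℂ H]
    (ξ η : ℕ → H) (B : ℝ)
    (hBessel : ∀ f : H, (Summable fun n => ‖⟪ξ n, f⟫‖ ^ 2) ∧
      ∑' n, ‖⟪ξ n, f⟫‖ ^ 2 ≤ B * ‖f‖ ^ 2)
    (hrep : ∀ f g : H, HasSum (fun n => ⟪ξ n, f⟫ * ⟪g, η n⟫) ⟪g, f⟫) :
    ∀ g : H, (Summable fun n => ‖⟪η n, g⟫‖ ^ 2) → ‖g‖ ^ 2 ≤ B * ∑' n, ‖⟪η n, g⟫‖ ^ 2 := by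
  intro g hη
  rcases eq_or_ne g 0 with rfl | hg
  · simp
  have hCS := (hrep g g).norm_sq_le_tsum_mul_tsum (hBessel g).1
    (by simpa only [norm_inner_symm] using hη)
  simp only [norm_inner_symm g, inner_self_eq_norm_sq_to_K, norm_pow, RCLike.norm_ofReal,
    abs_norm] at hCS
  refine le_of_mul_le_mul_left ?_ (by positivity : 0 < ‖g‖ ^ 2)
  calc ‖g‖ ^ 2 * ‖g‖ ^ 2 = (‖g‖ ^ 2) ^ 2 := (sq _).symm
    _ ≤ (∑' n, ‖⟪ξ n, g⟫‖ ^ 2) * ∑' n, ‖⟪η n, g⟫‖ ^ 2 := hCS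
    _ ≤ B * ‖g‖ ^ 2 * ∑' n, ‖⟪η n, g⟫‖ ^ 2 := by gcongr; exact (hBessel g).2
    _ = ‖g‖ ^ 2 * (B * ∑' n, ‖⟪η n, g⟫‖ ^ 2) := by ring

/-- If `ξ` is a Bessel sequence with bound `B` and `η` is a sequence with
`Σₙ ⟨f,ξₙ⟩⟨ηₙ,g⟩ = ⟨f,g⟩` for all `f,g ∈ H`, then `η` is a lower semi-frame with lower
bound `B⁻¹`: `‖g‖² ≤ B·Σₙ |⟨g,ηₙ⟩|²` for all `g ∈ H` (trivially true when the sum is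
infinite). -/
theorem stmt19 {H : Type*} [NormedAddCommGroup H] [InnerProductSpace ℂ H] [CompleteSpace H]
    (ξ η : ℕ → H) (B : ℝ) (hB : 0 < B)
    (hBessel : ∀ f : H, (Summable fun n => ‖⟪ξ n, f⟫‖ ^ 2) ∧
      ∑' n, ‖⟪ξ n, f⟫‖ ^ 2 ≤ B * ‖f‖ ^ 2)
    (hrep : ∀ f g : H, HasSum (fun n => ⟪ξ n, f⟫ * ⟪g, η n⟫) ⟪g, f⟫) :
    ∀ g : H, (Summable fun n => ‖⟪η n, g⟫‖ ^ 2) → ‖g‖ ^ 2 ≤ B * ∑' n, ‖⟪η n, g⟫‖ ^ 2 :=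
  stmt19_general ξ η B hBessel hrep
end
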